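/- There exist constants 0 < c ≤ C, independent of the polynomial, such that for every real polynomial p(X,Y) with degree at most 3 in X and at most 3 in Y one has c · ∬_{[0,1]²} |∇p(x,y)|² dx dy ≤ ∫₀¹ |∇p(t,0)|² dt + ∫₀¹ |∇p(t,1)|² dt + ∫₀¹ |∇p(0,t)|² dt + ∫₀¹ |∇p(1,t)|² dt ≤ C · ∬_{[0,1]²} |∇p(x,y)|² dx dy. In other words, the functionals s₁(p) = (Σ_{edges e ⊂ ∂K̂} ‖∇p‖²_{L²(e)})^{1/2} and s₂(p) = ‖∇p‖_{L²(K̂)} are equivalent norms on the quotient of the polynomial space Q₃ by the constants. -/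
import Mathlib

open MvPolynomial

/-- The squared Euclidean norm of the gradient of a bivariate polynomial at `(x, y)`. -/
noncomputable def gradSq (p : MvPolynomial (Fin 2) ℝ) (x y : ℝ) : ℝ :=
  (eval ![x, y] (pderiv 0 p)) ^ 2 + (eval ![x, y] (pderiv 1 p)) ^ 2

lemma mono_eq (i j : ℕ) (r : ℝ) :
    (monomial (Finsupp.single 0 i + Finsupp.single 1 j) r : MvPolynomial (Fin 2) ℝ)
      = C r * X 0 ^ i * X 1 ^ j := by
  rw [C_apply, X_pow_eq_monomial, X_pow_eq_monomial, monomial_mul, monomial_mul, zero_add,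
    mul_one, mul_one]

lemma hp_gen (q : MvPolynomial (Fin 2) ℝ) (h0 : q.degreeOf 0 ≤ 3) (h1 : q.degreeOf 1 ≤ 3) :
    q = ∑ i ∈ Finset.range 4, ∑ j ∈ Finset.range 4,
      C (coeff (Finsupp.single 0 i + Finsupp.single 1 j) q) * X 0 ^ i * X 1 ^ j := by
  simp only [← mono_eq]
  rw [← Finset.sum_product']
  have hinj : ∀ x ∈ Finset.range 4 ×ˢ Finset.range 4, ∀ y ∈ Finset.range 4 ×ˢ Finset.range 4,
      ((fun d : ℕ × ℕ => Finsupp.single (0 : Fin 2) d.1 + Finsupp.single 1 d.2) x =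
        (fun d : ℕ × ℕ => Finsupp.single (0 : Fin 2) d.1 + Finsupp.single 1 d.2) y) → x = y := by
    intro x _ y _ h
    have e0 := DFunLike.congr_fun h 0
    have e1 := DFunLike.congr_fun h 1
    simp [Finsupp.single_apply] at e0 e1
    exact Prod.ext e0 e1
  have key := Finset.sum_image (s := Finset.range 4 ×ˢ Finset.range 4)
    (g := fun d : ℕ × ℕ => Finsupp.single (0 : Fin 2) d.1 + Finsupp.single 1 d.2)
    (f := fun d : Fin 2 →₀ ℕ => monomial d (coeff d q)) hinj
  rw [← key]
  refine ((support_sum_monomial_coeff q).symm.trans (Finset.sum_subset ?_ ?_))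
  · intro d hd
    have hd0 : d 0 ≤ 3 := le_trans (monomial_le_degreeOf 0 hd) h0
    have hd1 : d 1 ≤ 3 := le_trans (monomial_le_degreeOf 1 hd) h1
    refine Finset.mem_image.mpr ⟨(d 0, d 1), ?_, ?_⟩
    · simp [Finset.mem_product, Nat.lt_succ_iff, hd0, hd1]
    · ext k
      fin_cases k <;> simp [Finsupp.single_apply]
  · intro d _ hd
    rw [MvPolynomial.notMem_support_iff.mp hd]
    simp

lemma ipoly7 (c : Fin 7 → ℝ) :
    ∫ t in (0:ℝ)..1, (∑ i : Fin 7, c i * t ^ (i : ℕ)) = ∑ i : Fin 7, c i / ((i : ℕ) + 1) := by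
  rw [intervalIntegral.integral_finset_sum]
  · refine Finset.sum_congr rfl fun i _ => ?_
    rw [intervalIntegral.integral_const_mul, integral_pow]
    norm_num [div_eq_mul_inv]
  · intro i _
    exact (Continuous.intervalIntegrable (by continuity) 0 1)

lemma ipoly (c0 c1 c2 c3 c4 c5 c6 : ℝ) :
    ∫ t in (0:ℝ)..1, (c0 + c1*t + c2*t^2 + c3*t^3 + c4*t^4 + c5*t^5 + c6*t^6)
      = c0 + c1/2 + c2/3 + c3/4 + c4/5 + c5/6 + c6/7 := by
  have h1 : ∀ t : ℝ, c0 + c1*t + c2*t^2 + c3*t^3 + c4*t^4 + c5*t^5 + c6*t^6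
      = ∑ i : Fin 7, (![c0,c1,c2,c3,c4,c5,c6] i) * t ^ (i:ℕ) := by
    intro t
    simp [Fin.sum_univ_succ]
    ring
  simp only [h1]
  rw [ipoly7]
  simp [Fin.sum_univ_succ]
  ring

set_option maxHeartbeats 4000000

/-- On the reference square, the boundary seminorm `s₁` and the `H¹`-seminorm `s₂` are
equivalent on the quotient of `Q₃` by the constants. -/
theorem stmt_5 : ∃ c C : ℝ, 0 < c ∧ c ≤ C ∧
    ∀ p : MvPolynomial (Fin 2) ℝ, p.degreeOf 0 ≤ 3 → p.degreeOf 1 ≤ 3 →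
      c * (∫ x in (0:ℝ)..1, ∫ y in (0:ℝ)..1, gradSq p x y) ≤
        (∫ t in (0:ℝ)..1, gradSq p t 0) + (∫ t in (0:ℝ)..1, gradSq p t 1) +
        (∫ t in (0:ℝ)..1, gradSq p 0 t) + (∫ t in (0:ℝ)..1, gradSq p 1 t) ∧
      (∫ t in (0:ℝ)..1, gradSq p t 0) + (∫ t in (0:ℝ)..1, gradSq p t 1) +
        (∫ t in (0:ℝ)..1, gradSq p 0 t) + (∫ t in (0:ℝ)..1, gradSq p 1 t) ≤
        C * (∫ x in (0:ℝ)..1, ∫ y in (0:ℝ)..1, gradSq p x y) := by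
  refine ⟨1, 32, one_pos, by norm_num, ?_⟩
  intro p h0 h1
  obtain ⟨a, ha⟩ : ∃ a : ℕ → ℕ → ℝ,
      ∀ i j, a i j = coeff (Finsupp.single 0 i + Finsupp.single 1 j) p :=
    ⟨_, fun _ _ => rfl⟩
  have hp : p = ∑ i ∈ Finset.range 4, ∑ j ∈ Finset.range 4,
      C (a i j) * X 0 ^ i * X 1 ^ j := by
    simp only [ha]
    exact hp_gen p h0 h1
  have hq0 : ∀ x y : ℝ, eval ![x, y] (pderiv 0 p) =
      a 1 0 + 2*(a 2 0)*x + 3*(a 3 0)*x^2 + (a 1 1)*y + 2*(a 2 1)*x*y + 3*(a 3 1)*x^2*y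
      + (a 1 2)*y^2 + 2*(a 2 2)*x*y^2 + 3*(a 3 2)*x^2*y^2 + (a 1 3)*y^3 + 2*(a 2 3)*x*y^3
      + 3*(a 3 3)*x^2*y^3 := by
    intro x y
    rw [hp]
    simp only [Finset.sum_range_succ, Finset.sum_range_zero, zero_add, map_add, pderiv_mul,
      pderiv_C, pderiv_pow, pderiv_X_self, pderiv_X_of_ne (show (1:Fin 2) ≠ 0 by decide),
      pderiv_X_of_ne (show (0:Fin 2) ≠ 1 by decide), eval_add, eval_mul, eval_pow, eval_C,
      eval_X, map_zero, map_one, map_ofNat, nsmul_eq_mul, smul_eq_mul, map_natCast,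
      Nat.cast_ofNat, Matrix.cons_val_zero, Matrix.cons_val_one, Matrix.head_cons]
    ring
  have hq1 : ∀ x y : ℝ, eval ![x, y] (pderiv 1 p) =
      a 0 1 + (a 1 1)*x + (a 2 1)*x^2 + (a 3 1)*x^3 + 2*(a 0 2)*y + 2*(a 1 2)*x*y
      + 2*(a 2 2)*x^2*y + 2*(a 3 2)*x^3*y + 3*(a 0 3)*y^2 + 3*(a 1 3)*x*y^2
      + 3*(a 2 3)*x^2*y^2 + 3*(a 3 3)*x^3*y^2 := by
    intro x y
    rw [hp]
    simp only [Finset.sum_range_succ, Finset.sum_range_zero, zero_add, map_add, pderiv_mul,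
      pderiv_C, pderiv_pow, pderiv_X_self, pderiv_X_of_ne (show (1:Fin 2) ≠ 0 by decide),
      pderiv_X_of_ne (show (0:Fin 2) ≠ 1 by decide), eval_add, eval_mul, eval_pow, eval_C,
      eval_X, map_zero, map_one, map_ofNat, nsmul_eq_mul, smul_eq_mul, map_natCast,
      Nat.cast_ofNat, Matrix.cons_val_zero, Matrix.cons_val_one, Matrix.head_cons]
    ring
  have e1 : (∫ t in (0:ℝ)..1, gradSq p t 0) = 1 * a 0 1 ^ 2 + 1 * a 0 1 * a 1 1 + (2/3) * a 0 1 * a 2 1 + (1/2) * a 0 1 * a 3 1 + 1 * a 1 0 ^ 2 + 2 * a 1 0 * a 2 0 + 2 * a 1 0 * a 3 0 + (1/3) * a 1 1 ^ 2 + (1/2) * a 1 1 * a 2 1 + (2/5) * a 1 1 * a 3 1 + (4/3) * a 2 0 ^ 2 + 3 * a 2 0 * a 3 0 + (1/5) * a 2 1 ^ 2 + (1/3) * a 2 1 * a 3 1 + (9/5) * a 3 0 ^ 2 + (1/7) * a 3 1 ^ 2 := by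
    have h : ∀ t : ℝ, gradSq p t 0 = (1 * a 0 1 ^ 2 + 1 * a 1 0 ^ 2) + (2 * a 0 1 * a 1 1 + 4 * a 1 0 * a 2 0) * t + (2 * a 0 1 * a 2 1 + 6 * a 1 0 * a 3 0 + 1 * a 1 1 ^ 2 + 4 * a 2 0 ^ 2) * t ^ 2 + (2 * a 0 1 * a 3 1 + 2 * a 1 1 * a 2 1 + 12 * a 2 0 * a 3 0) * t ^ 3 + (2 * a 1 1 * a 3 1 + 1 * a 2 1 ^ 2 + 9 * a 3 0 ^ 2) * t ^ 4 + (2 * a 2 1 * a 3 1) * t ^ 5 + (1 * a 3 1 ^ 2) * t ^ 6 := by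
      intro t
      simp only [gradSq, hq0, hq1]
      ring
    simp only [h]
    rw [ipoly]
    ring
  have e2 : (∫ t in (0:ℝ)..1, gradSq p t 1) = 1 * a 0 1 ^ 2 + 4 * a 0 1 * a 0 2 + 6 * a 0 1 * a 0 3 + 1 * a 0 1 * a 1 1 + 2 * a 0 1 * a 1 2 + 3 * a 0 1 * a 1 3 + (2/3) * a 0 1 * a 2 1 + (4/3) * a 0 1 * a 2 2 + 2 * a 0 1 * a 2 3 + (1/2) * a 0 1 * a 3 1 + 1 * a 0 1 * a 3 2 + (3/2) * a 0 1 * a 3 3 + 4 * a 0 2 ^ 2 + 12 * a 0 2 * a 0 3 + 2 * a 0 2 * a 1 1 + 4 * a 0 2 * a 1 2 + 6 * a 0 2 * a 1 3 + (4/3) * a 0 2 * a 2 1 + (8/3) * a 0 2 * a 2 2 + 4 * a 0 2 * a 2 3 + 1 * a 0 2 * a 3 1 + 2 * a 0 2 * a 3 2 + 3 * a 0 2 * a 3 3 + 9 * a 0 3 ^ 2 + 3 * a 0 3 * a 1 1 + 6 * a 0 3 * a 1 2 + 9 * a 0 3 * a 1 3 + 2 * a 0 3 * a 2 1 + 4 *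 a 0 3 * a 2 2 + 6 * a 0 3 * a 2 3 + (3/2) * a 0 3 * a 3 1 + 3 * a 0 3 * a 3 2 + (9/2) * a 0 3 * a 3 3 + 1 * a 1 0 ^ 2 + 2 * a 1 0 * a 1 1 + 2 * a 1 0 * a 1 2 + 2 * a 1 0 * a 1 3 + 2 * a 1 0 * a 2 0 + 2 * a 1 0 * a 2 1 + 2 * a 1 0 * a 2 2 + 2 * a 1 0 * a 2 3 + 2 * a 1 0 * a 3 0 + 2 * a 1 0 * a 3 1 + 2 * a 1 0 * a 3 2 + 2 * a 1 0 * a 3 3 + (4/3) * a 1 1 ^ 2 + (10/3) * a 1 1 * a 1 2 + 4 * a 1 1 * a 1 3 + 2 * a 1 1 * a 2 0 + (5/2) * a 1 1 * a 2 1 + 3 * a 1 1 * a 2 2 + (7/2) * a 1 1 * a 2 3 + 2 * a 1 1 * a 3 0 + (12/5) * a 1 1 * a 3 1 + (14/5) * a 1 1 * a 3 2 + (16/5) * a 1 1 * a 3 3 + (7/3) * a 1 2 ^ 2 + 6 * a 1 2 * a 1 3 + 2 * a 1 2 * a 2 0 + 3 * a 1 2 * a 2 1 + 4 * a 1 2 *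 a 2 2 + 5 * a 1 2 * a 2 3 + 2 * a 1 2 * a 3 0 + (14/5) * a 1 2 * a 3 1 + (18/5) * a 1 2 * a 3 2 + (22/5) * a 1 2 * a 3 3 + 4 * a 1 3 ^ 2 + 2 * a 1 3 * a 2 0 + (7/2) * a 1 3 * a 2 1 + 5 * a 1 3 * a 2 2 + (13/2) * a 1 3 * a 2 3 + 2 * a 1 3 * a 3 0 + (16/5) * a 1 3 * a 3 1 + (22/5) * a 1 3 * a 3 2 + (28/5) * a 1 3 * a 3 3 + (4/3) * a 2 0 ^ 2 + (8/3) * a 2 0 * a 2 1 + (8/3) * a 2 0 * a 2 2 + (8/3) * a 2 0 * a 2 3 + 3 * a 2 0 * a 3 0 + 3 * a 2 0 * a 3 1 + 3 * a 2 0 * a 3 2 + 3 * a 2 0 * a 3 3 + (23/15) * a 2 1 ^ 2 + (52/15) * a 2 1 * a 2 2 + (58/15) * a 2 1 * a 2 3 + 3 * a 2 1 * a 3 0 + (10/3) * a 2 1 * a 3 1 + (11/3) * a 2 1 * a 3 2 + 4 * a 2 1 * a 3 3 + (32/15) * a 2 2 ^ 2 + (76/15) * a 2 2 * a 2 3 +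 3 * a 2 2 * a 3 0 + (11/3) * a 2 2 * a 3 1 + (13/3) * a 2 2 * a 3 2 + 5 * a 2 2 * a 3 3 + (47/15) * a 2 3 ^ 2 + 3 * a 2 3 * a 3 0 + 4 * a 2 3 * a 3 1 + 5 * a 2 3 * a 3 2 + 6 * a 2 3 * a 3 3 + (9/5) * a 3 0 ^ 2 + (18/5) * a 3 0 * a 3 1 + (18/5) * a 3 0 * a 3 2 + (18/5) * a 3 0 * a 3 3 + (68/35) * a 3 1 ^ 2 + (146/35) * a 3 1 * a 3 2 + (156/35) * a 3 1 * a 3 3 + (83/35) * a 3 2 ^ 2 + (186/35) * a 3 2 * a 3 3 + (108/35) * a 3 3 ^ 2 := by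
    have h : ∀ t : ℝ, gradSq p t 1 = (1 * a 0 1 ^ 2 + 4 * a 0 1 * a 0 2 + 6 * a 0 1 * a 0 3 + 4 * a 0 2 ^ 2 + 12 * a 0 2 * a 0 3 + 9 * a 0 3 ^ 2 + 1 * a 1 0 ^ 2 + 2 * a 1 0 * a 1 1 + 2 * a 1 0 * a 1 2 + 2 * a 1 0 * a 1 3 + 1 * a 1 1 ^ 2 + 2 * a 1 1 * a 1 2 + 2 * a 1 1 * a 1 3 + 1 * a 1 2 ^ 2 + 2 * a 1 2 * a 1 3 + 1 * a 1 3 ^ 2) + (2 * a 0 1 * a 1 1 + 4 * a 0 1 * a 1 2 + 6 * a 0 1 * a 1 3 + 4 * a 0 2 * a 1 1 + 8 * a 0 2 * a 1 2 + 12 * a 0 2 * a 1 3 + 6 * a 0 3 * a 1 1 + 12 * a 0 3 * a 1 2 + 18 * a 0 3 * a 1 3 + 4 * a 1 0 * a 2 0 + 4 * a 1 0 * a 2 1 + 4 * a 1 0 * a 2 2 + 4 * a 1 0 * a 2 3 + 4 * a 1 1 * a 2 0 + 4 * a 1 1 * a 2 1 + 4 * a 1 1 * a 2 2 + 4 * a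 1 1 * a 2 3 + 4 * a 1 2 * a 2 0 + 4 * a 1 2 * a 2 1 + 4 * a 1 2 * a 2 2 + 4 * a 1 2 * a 2 3 + 4 * a 1 3 * a 2 0 + 4 * a 1 3 * a 2 1 + 4 * a 1 3 * a 2 2 + 4 * a 1 3 * a 2 3) * t + (2 * a 0 1 * a 2 1 + 4 * a 0 1 * a 2 2 + 6 * a 0 1 * a 2 3 + 4 * a 0 2 * a 2 1 + 8 * a 0 2 * a 2 2 + 12 * a 0 2 * a 2 3 + 6 * a 0 3 * a 2 1 + 12 * a 0 3 * a 2 2 + 18 * a 0 3 * a 2 3 + 6 * a 1 0 * a 3 0 + 6 * a 1 0 * a 3 1 + 6 * a 1 0 * a 3 2 + 6 * a 1 0 * a 3 3 + 1 * a 1 1 ^ 2 + 4 * a 1 1 * a 1 2 + 6 * a 1 1 * a 1 3 + 6 * a 1 1 * a 3 0 + 6 * a 1 1 * a 3 1 + 6 * a 1 1 * a 3 2 + 6 * a 1 1 * a 3 3 + 4 * a 1 2 ^ 2 + 12 * a 1 2 * a 1 3 + 6 * a 1 2 * a 3 0 + 6 * a 1 2 * a 3 1 + 6 * a 1 2 *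 a 3 2 + 6 * a 1 2 * a 3 3 + 9 * a 1 3 ^ 2 + 6 * a 1 3 * a 3 0 + 6 * a 1 3 * a 3 1 + 6 * a 1 3 * a 3 2 + 6 * a 1 3 * a 3 3 + 4 * a 2 0 ^ 2 + 8 * a 2 0 * a 2 1 + 8 * a 2 0 * a 2 2 + 8 * a 2 0 * a 2 3 + 4 * a 2 1 ^ 2 + 8 * a 2 1 * a 2 2 + 8 * a 2 1 * a 2 3 + 4 * a 2 2 ^ 2 + 8 * a 2 2 * a 2 3 + 4 * a 2 3 ^ 2) * t ^ 2 + (2 * a 0 1 * a 3 1 + 4 * a 0 1 * a 3 2 + 6 * a 0 1 * a 3 3 + 4 * a 0 2 * a 3 1 + 8 * a 0 2 * a 3 2 + 12 * a 0 2 * a 3 3 + 6 * a 0 3 * a 3 1 + 12 * a 0 3 * a 3 2 + 18 * a 0 3 * a 3 3 + 2 * a 1 1 * a 2 1 + 4 * a 1 1 * a 2 2 + 6 * a 1 1 * a 2 3 + 4 * a 1 2 * a 2 1 + 8 * a 1 2 * a 2 2 + 12 * a 1 2 * a 2 3 + 6 * a 1 3 * a 2 1 + 12 * a 1 3 * a 2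 2 + 18 * a 1 3 * a 2 3 + 12 * a 2 0 * a 3 0 + 12 * a 2 0 * a 3 1 + 12 * a 2 0 * a 3 2 + 12 * a 2 0 * a 3 3 + 12 * a 2 1 * a 3 0 + 12 * a 2 1 * a 3 1 + 12 * a 2 1 * a 3 2 + 12 * a 2 1 * a 3 3 + 12 * a 2 2 * a 3 0 + 12 * a 2 2 * a 3 1 + 12 * a 2 2 * a 3 2 + 12 * a 2 2 * a 3 3 + 12 * a 2 3 * a 3 0 + 12 * a 2 3 * a 3 1 + 12 * a 2 3 * a 3 2 + 12 * a 2 3 * a 3 3) * t ^ 3 + (2 * a 1 1 * a 3 1 + 4 * a 1 1 * a 3 2 + 6 * a 1 1 * a 3 3 + 4 * a 1 2 * a 3 1 + 8 * a 1 2 * a 3 2 + 12 * a 1 2 * a 3 3 + 6 * a 1 3 * a 3 1 + 12 * a 1 3 * a 3 2 + 18 * a 1 3 * a 3 3 + 1 * a 2 1 ^ 2 + 4 * a 2 1 * a 2 2 + 6 * a 2 1 * a 2 3 + 4 * a 2 2 ^ 2 + 12 * a 2 2 * a 2 3 + 9 * a 2 3 ^ 2 + 9 * a 3 0 ^ 2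 + 18 * a 3 0 * a 3 1 + 18 * a 3 0 * a 3 2 + 18 * a 3 0 * a 3 3 + 9 * a 3 1 ^ 2 + 18 * a 3 1 * a 3 2 + 18 * a 3 1 * a 3 3 + 9 * a 3 2 ^ 2 + 18 * a 3 2 * a 3 3 + 9 * a 3 3 ^ 2) * t ^ 4 + (2 * a 2 1 * a 3 1 + 4 * a 2 1 * a 3 2 + 6 * a 2 1 * a 3 3 + 4 * a 2 2 * a 3 1 + 8 * a 2 2 * a 3 2 + 12 * a 2 2 * a 3 3 + 6 * a 2 3 * a 3 1 + 12 * a 2 3 * a 3 2 + 18 * a 2 3 * a 3 3) * t ^ 5 + (1 * a 3 1 ^ 2 + 4 * a 3 1 * a 3 2 + 6 * a 3 1 * a 3 3 + 4 * a 3 2 ^ 2 + 12 * a 3 2 * a 3 3 + 9 * a 3 3 ^ 2) * t ^ 6 := by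
      intro t
      simp only [gradSq, hq0, hq1]
      ring
    simp only [h]
    rw [ipoly]
    ring
  have e3 : (∫ t in (0:ℝ)..1, gradSq p 0 t) = 1 * a 0 1 ^ 2 + 2 * a 0 1 * a 0 2 + 2 * a 0 1 * a 0 3 + (4/3) * a 0 2 ^ 2 + 3 * a 0 2 * a 0 3 + (9/5) * a 0 3 ^ 2 + 1 * a 1 0 ^ 2 + 1 * a 1 0 * a 1 1 + (2/3) * a 1 0 * a 1 2 + (1/2) * a 1 0 * a 1 3 + (1/3) * a 1 1 ^ 2 + (1/2) * a 1 1 * a 1 2 + (2/5) * a 1 1 * a 1 3 + (1/5) * a 1 2 ^ 2 + (1/3) * a 1 2 * a 1 3 + (1/7) * a 1 3 ^ 2 := by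
    have h : ∀ t : ℝ, gradSq p 0 t = (1 * a 0 1 ^ 2 + 1 * a 1 0 ^ 2) + (4 * a 0 1 * a 0 2 + 2 * a 1 0 * a 1 1) * t + (6 * a 0 1 * a 0 3 + 4 * a 0 2 ^ 2 + 2 * a 1 0 * a 1 2 + 1 * a 1 1 ^ 2) * t ^ 2 + (12 * a 0 2 * a 0 3 + 2 * a 1 0 * a 1 3 + 2 * a 1 1 * a 1 2) * t ^ 3 + (9 * a 0 3 ^ 2 + 2 * a 1 1 * a 1 3 + 1 * a 1 2 ^ 2) * t ^ 4 + (2 * a 1 2 * a 1 3) * t ^ 5 + (1 * a 1 3 ^ 2) * t ^ 6 := by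
      intro t
      simp only [gradSq, hq0, hq1]
      ring
    simp only [h]
    rw [ipoly]
    ring
  have e4 : (∫ t in (0:ℝ)..1, gradSq p 1 t) = 1 * a 0 1 ^ 2 + 2 * a 0 1 * a 0 2 + 2 * a 0 1 * a 0 3 + 2 * a 0 1 * a 1 1 + 2 * a 0 1 * a 1 2 + 2 * a 0 1 * a 1 3 + 2 * a 0 1 * a 2 1 + 2 * a 0 1 * a 2 2 + 2 * a 0 1 * a 2 3 + 2 * a 0 1 * a 3 1 + 2 * a 0 1 * a 3 2 + 2 * a 0 1 * a 3 3 + (4/3) * a 0 2 ^ 2 + 3 * a 0 2 * a 0 3 + 2 * a 0 2 * a 1 1 + (8/3) * a 0 2 * a 1 2 + 3 * a 0 2 * a 1 3 + 2 * a 0 2 * a 2 1 + (8/3) * a 0 2 * a 2 2 + 3 * a 0 2 * a 2 3 + 2 * a 0 2 * a 3 1 + (8/3) * a 0 2 * a 3 2 + 3 * a 0 2 * a 3 3 + (9/5) * a 0 3 ^ 2 + 2 * a 0 3 * a 1 1 + 3 * a 0 3 * a 1 2 + (18/5) * a 0 3 * a 1 3 + 2 * a 0 3 * a 2 1 + 3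 * a 0 3 * a 2 2 + (18/5) * a 0 3 * a 2 3 + 2 * a 0 3 * a 3 1 + 3 * a 0 3 * a 3 2 + (18/5) * a 0 3 * a 3 3 + 1 * a 1 0 ^ 2 + 1 * a 1 0 * a 1 1 + (2/3) * a 1 0 * a 1 2 + (1/2) * a 1 0 * a 1 3 + 4 * a 1 0 * a 2 0 + 2 * a 1 0 * a 2 1 + (4/3) * a 1 0 * a 2 2 + 1 * a 1 0 * a 2 3 + 6 * a 1 0 * a 3 0 + 3 * a 1 0 * a 3 1 + 2 * a 1 0 * a 3 2 + (3/2) * a 1 0 * a 3 3 + (4/3) * a 1 1 ^ 2 + (5/2) * a 1 1 * a 1 2 + (12/5) * a 1 1 * a 1 3 + 2 * a 1 1 * a 2 0 + (10/3) * a 1 1 * a 2 1 + 3 * a 1 1 * a 2 2 + (14/5) * a 1 1 * a 2 3 + 3 * a 1 1 * a 3 0 + 4 * a 1 1 * a 3 1 + (7/2) * a 1 1 * a 3 2 + (16/5) * a 1 1 * a 3 3 + (23/15) * a 1 2 ^ 2 + (10/3) * a 1 2 * a 1 3 + (4/3) * a 1 2 * a 2 0 + 3 * a 1 2 * a 2 1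 + (52/15) * a 1 2 * a 2 2 + (11/3) * a 1 2 * a 2 3 + 2 * a 1 2 * a 3 0 + (7/2) * a 1 2 * a 3 1 + (58/15) * a 1 2 * a 3 2 + 4 * a 1 2 * a 3 3 + (68/35) * a 1 3 ^ 2 + 1 * a 1 3 * a 2 0 + (14/5) * a 1 3 * a 2 1 + (11/3) * a 1 3 * a 2 2 + (146/35) * a 1 3 * a 2 3 + (3/2) * a 1 3 * a 3 0 + (16/5) * a 1 3 * a 3 1 + 4 * a 1 3 * a 3 2 + (156/35) * a 1 3 * a 3 3 + 4 * a 2 0 ^ 2 + 4 * a 2 0 * a 2 1 + (8/3) * a 2 0 * a 2 2 + 2 * a 2 0 * a 2 3 + 12 * a 2 0 * a 3 0 + 6 * a 2 0 * a 3 1 + 4 * a 2 0 * a 3 2 + 3 * a 2 0 * a 3 3 + (7/3) * a 2 1 ^ 2 + 4 * a 2 1 * a 2 2 + (18/5) * a 2 1 * a 2 3 + 6 * a 2 1 * a 3 0 + 6 * a 2 1 * a 3 1 + 5 * a 2 1 * a 3 2 + (22/5) * a 2 1 * a 3 3 + (32/15) * a 2 2 ^ 2 + (13/3) * a 2 2 *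 a 2 3 + 4 * a 2 2 * a 3 0 + 5 * a 2 2 * a 3 1 + (76/15) * a 2 2 * a 3 2 + 5 * a 2 2 * a 3 3 + (83/35) * a 2 3 ^ 2 + 3 * a 2 3 * a 3 0 + (22/5) * a 2 3 * a 3 1 + 5 * a 2 3 * a 3 2 + (186/35) * a 2 3 * a 3 3 + 9 * a 3 0 ^ 2 + 9 * a 3 0 * a 3 1 + 6 * a 3 0 * a 3 2 + (9/2) * a 3 0 * a 3 3 + 4 * a 3 1 ^ 2 + (13/2) * a 3 1 * a 3 2 + (28/5) * a 3 1 * a 3 3 + (47/15) * a 3 2 ^ 2 + 6 * a 3 2 * a 3 3 + (108/35) * a 3 3 ^ 2 := by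
    have h : ∀ t : ℝ, gradSq p 1 t = (1 * a 0 1 ^ 2 + 2 * a 0 1 * a 1 1 + 2 * a 0 1 * a 2 1 + 2 * a 0 1 * a 3 1 + 1 * a 1 0 ^ 2 + 4 * a 1 0 * a 2 0 + 6 * a 1 0 * a 3 0 + 1 * a 1 1 ^ 2 + 2 * a 1 1 * a 2 1 + 2 * a 1 1 * a 3 1 + 4 * a 2 0 ^ 2 + 12 * a 2 0 * a 3 0 + 1 * a 2 1 ^ 2 + 2 * a 2 1 * a 3 1 + 9 * a 3 0 ^ 2 + 1 * a 3 1 ^ 2) + (4 * a 0 1 * a 0 2 + 4 * a 0 1 * a 1 2 + 4 * a 0 1 * a 2 2 + 4 * a 0 1 * a 3 2 + 4 * a 0 2 * a 1 1 + 4 * a 0 2 * a 2 1 + 4 * a 0 2 * a 3 1 + 2 * a 1 0 * a 1 1 + 4 * a 1 0 * a 2 1 + 6 * a 1 0 * a 3 1 + 4 * a 1 1 * a 1 2 + 4 * a 1 1 * a 2 0 + 4 * a 1 1 * a 2 2 + 6 * a 1 1 * a 3 0 + 4 * a 1 1 * a 3 2 + 4 * a 1 2 * a 2 1 + 4 * a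 1 2 * a 3 1 + 8 * a 2 0 * a 2 1 + 12 * a 2 0 * a 3 1 + 4 * a 2 1 * a 2 2 + 12 * a 2 1 * a 3 0 + 4 * a 2 1 * a 3 2 + 4 * a 2 2 * a 3 1 + 18 * a 3 0 * a 3 1 + 4 * a 3 1 * a 3 2) * t + (6 * a 0 1 * a 0 3 + 6 * a 0 1 * a 1 3 + 6 * a 0 1 * a 2 3 + 6 * a 0 1 * a 3 3 + 4 * a 0 2 ^ 2 + 8 * a 0 2 * a 1 2 + 8 * a 0 2 * a 2 2 + 8 * a 0 2 * a 3 2 + 6 * a 0 3 * a 1 1 + 6 * a 0 3 * a 2 1 + 6 * a 0 3 * a 3 1 + 2 * a 1 0 * a 1 2 + 4 * a 1 0 * a 2 2 + 6 * a 1 0 * a 3 2 + 1 * a 1 1 ^ 2 + 6 * a 1 1 * a 1 3 + 4 * a 1 1 * a 2 1 + 6 * a 1 1 * a 2 3 + 6 * a 1 1 * a 3 1 + 6 * a 1 1 * a 3 3 + 4 * a 1 2 ^ 2 + 4 * a 1 2 * a 2 0 + 8 * a 1 2 * a 2 2 + 6 * a 1 2 * a 3 0 + 8 * a 1 2 * a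 3 2 + 6 * a 1 3 * a 2 1 + 6 * a 1 3 * a 3 1 + 8 * a 2 0 * a 2 2 + 12 * a 2 0 * a 3 2 + 4 * a 2 1 ^ 2 + 6 * a 2 1 * a 2 3 + 12 * a 2 1 * a 3 1 + 6 * a 2 1 * a 3 3 + 4 * a 2 2 ^ 2 + 12 * a 2 2 * a 3 0 + 8 * a 2 2 * a 3 2 + 6 * a 2 3 * a 3 1 + 18 * a 3 0 * a 3 2 + 9 * a 3 1 ^ 2 + 6 * a 3 1 * a 3 3 + 4 * a 3 2 ^ 2) * t ^ 2 + (12 * a 0 2 * a 0 3 + 12 * a 0 2 * a 1 3 + 12 * a 0 2 * a 2 3 + 12 * a 0 2 * a 3 3 + 12 * a 0 3 * a 1 2 + 12 * a 0 3 * a 2 2 + 12 * a 0 3 * a 3 2 + 2 * a 1 0 * a 1 3 + 4 * a 1 0 * a 2 3 + 6 * a 1 0 * a 3 3 + 2 * a 1 1 * a 1 2 + 4 * a 1 1 * a 2 2 + 6 * a 1 1 * a 3 2 + 12 * a 1 2 * a 1 3 + 4 * a 1 2 * a 2 1 + 12 * a 1 2 * a 2 3 + 6 * a 1 2 * a 3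 1 + 12 * a 1 2 * a 3 3 + 4 * a 1 3 * a 2 0 + 12 * a 1 3 * a 2 2 + 6 * a 1 3 * a 3 0 + 12 * a 1 3 * a 3 2 + 8 * a 2 0 * a 2 3 + 12 * a 2 0 * a 3 3 + 8 * a 2 1 * a 2 2 + 12 * a 2 1 * a 3 2 + 12 * a 2 2 * a 2 3 + 12 * a 2 2 * a 3 1 + 12 * a 2 2 * a 3 3 + 12 * a 2 3 * a 3 0 + 12 * a 2 3 * a 3 2 + 18 * a 3 0 * a 3 3 + 18 * a 3 1 * a 3 2 + 12 * a 3 2 * a 3 3) * t ^ 3 + (9 * a 0 3 ^ 2 + 18 * a 0 3 * a 1 3 + 18 * a 0 3 * a 2 3 + 18 * a 0 3 * a 3 3 + 2 * a 1 1 * a 1 3 + 4 * a 1 1 * a 2 3 + 6 * a 1 1 * a 3 3 + 1 * a 1 2 ^ 2 + 4 * a 1 2 * a 2 2 + 6 * a 1 2 * a 3 2 + 9 * a 1 3 ^ 2 + 4 * a 1 3 * a 2 1 + 18 * a 1 3 * a 2 3 + 6 * a 1 3 * a 3 1 + 18 * a 1 3 * a 3 3 + 8 * a 2 1 * a 2 3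 + 12 * a 2 1 * a 3 3 + 4 * a 2 2 ^ 2 + 12 * a 2 2 * a 3 2 + 9 * a 2 3 ^ 2 + 12 * a 2 3 * a 3 1 + 18 * a 2 3 * a 3 3 + 18 * a 3 1 * a 3 3 + 9 * a 3 2 ^ 2 + 9 * a 3 3 ^ 2) * t ^ 4 + (2 * a 1 2 * a 1 3 + 4 * a 1 2 * a 2 3 + 6 * a 1 2 * a 3 3 + 4 * a 1 3 * a 2 2 + 6 * a 1 3 * a 3 2 + 8 * a 2 2 * a 2 3 + 12 * a 2 2 * a 3 3 + 12 * a 2 3 * a 3 2 + 18 * a 3 2 * a 3 3) * t ^ 5 + (1 * a 1 3 ^ 2 + 4 * a 1 3 * a 2 3 + 6 * a 1 3 * a 3 3 + 4 * a 2 3 ^ 2 + 12 * a 2 3 * a 3 3 + 9 * a 3 3 ^ 2) * t ^ 6 := by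
      intro t
      simp only [gradSq, hq0, hq1]
      ring
    simp only [h]
    rw [ipoly]
    ring
  have hin : ∀ x : ℝ, (∫ y in (0:ℝ)..1, gradSq p x y) = (1 * a 0 1 ^ 2 + 2 * a 0 1 * a 0 2 + 2 * a 0 1 * a 0 3 + (4/3) * a 0 2 ^ 2 + 3 * a 0 2 * a 0 3 + (9/5) * a 0 3 ^ 2 + 1 * a 1 0 ^ 2 + 1 * a 1 0 * a 1 1 + (2/3) * a 1 0 * a 1 2 + (1/2) * a 1 0 * a 1 3 + (1/3) * a 1 1 ^ 2 + (1/2) * a 1 1 * a 1 2 + (2/5) * a 1 1 * a 1 3 + (1/5) * a 1 2 ^ 2 + (1/3) * a 1 2 * a 1 3 + (1/7) * a 1 3 ^ 2) + (2 * a 0 1 * a 1 1 + 2 * a 0 1 * a 1 2 + 2 * a 0 1 * a 1 3 + 2 * a 0 2 * a 1 1 + (8/3) * a 0 2 * a 1 2 + 3 * a 0 2 * a 1 3 + 2 * a 0 3 * a 1 1 + 3 * a 0 3 * a 1 2 + (18/5) * a 0 3 * a 1 3 + 4 * a 1 0 * a 2 0 + 2 * a 1 0 * a 2 1 + (4/3)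 * a 1 0 * a 2 2 + 1 * a 1 0 * a 2 3 + 2 * a 1 1 * a 2 0 + (4/3) * a 1 1 * a 2 1 + 1 * a 1 1 * a 2 2 + (4/5) * a 1 1 * a 2 3 + (4/3) * a 1 2 * a 2 0 + 1 * a 1 2 * a 2 1 + (4/5) * a 1 2 * a 2 2 + (2/3) * a 1 2 * a 2 3 + 1 * a 1 3 * a 2 0 + (4/5) * a 1 3 * a 2 1 + (2/3) * a 1 3 * a 2 2 + (4/7) * a 1 3 * a 2 3) * x + (2 * a 0 1 * a 2 1 + 2 * a 0 1 * a 2 2 + 2 * a 0 1 * a 2 3 + 2 * a 0 2 * a 2 1 + (8/3) * a 0 2 * a 2 2 + 3 * a 0 2 * a 2 3 + 2 * a 0 3 * a 2 1 + 3 * a 0 3 * a 2 2 + (18/5) * a 0 3 * a 2 3 + 6 * a 1 0 * a 3 0 + 3 * a 1 0 * a 3 1 + 2 * a 1 0 * a 3 2 + (3/2) * a 1 0 * a 3 3 + 1 * a 1 1 ^ 2 + 2 * a 1 1 * a 1 2 + 2 * a 1 1 * a 1 3 + 3 * a 1 1 * a 3 0 + 2 * a 1 1 * a 3 1 + (3/2)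 * a 1 1 * a 3 2 + (6/5) * a 1 1 * a 3 3 + (4/3) * a 1 2 ^ 2 + 3 * a 1 2 * a 1 3 + 2 * a 1 2 * a 3 0 + (3/2) * a 1 2 * a 3 1 + (6/5) * a 1 2 * a 3 2 + 1 * a 1 2 * a 3 3 + (9/5) * a 1 3 ^ 2 + (3/2) * a 1 3 * a 3 0 + (6/5) * a 1 3 * a 3 1 + 1 * a 1 3 * a 3 2 + (6/7) * a 1 3 * a 3 3 + 4 * a 2 0 ^ 2 + 4 * a 2 0 * a 2 1 + (8/3) * a 2 0 * a 2 2 + 2 * a 2 0 * a 2 3 + (4/3) * a 2 1 ^ 2 + 2 * a 2 1 * a 2 2 + (8/5) * a 2 1 * a 2 3 + (4/5) * a 2 2 ^ 2 + (4/3) * a 2 2 * a 2 3 + (4/7) * a 2 3 ^ 2) * x ^ 2 + (2 * a 0 1 * a 3 1 + 2 * a 0 1 * a 3 2 + 2 * a 0 1 * a 3 3 + 2 * a 0 2 * a 3 1 + (8/3) * a 0 2 * a 3 2 + 3 * a 0 2 * a 3 3 + 2 * a 0 3 * a 3 1 + 3 * a 0 3 * a 3 2 + (18/5) * a 0 3 *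 a 3 3 + 2 * a 1 1 * a 2 1 + 2 * a 1 1 * a 2 2 + 2 * a 1 1 * a 2 3 + 2 * a 1 2 * a 2 1 + (8/3) * a 1 2 * a 2 2 + 3 * a 1 2 * a 2 3 + 2 * a 1 3 * a 2 1 + 3 * a 1 3 * a 2 2 + (18/5) * a 1 3 * a 2 3 + 12 * a 2 0 * a 3 0 + 6 * a 2 0 * a 3 1 + 4 * a 2 0 * a 3 2 + 3 * a 2 0 * a 3 3 + 6 * a 2 1 * a 3 0 + 4 * a 2 1 * a 3 1 + 3 * a 2 1 * a 3 2 + (12/5) * a 2 1 * a 3 3 + 4 * a 2 2 * a 3 0 + 3 * a 2 2 * a 3 1 + (12/5) * a 2 2 * a 3 2 + 2 * a 2 2 * a 3 3 + 3 * a 2 3 * a 3 0 + (12/5) * a 2 3 * a 3 1 + 2 * a 2 3 * a 3 2 + (12/7) * a 2 3 * a 3 3) * x ^ 3 + (2 * a 1 1 * a 3 1 + 2 * a 1 1 * a 3 2 + 2 * a 1 1 * a 3 3 + 2 * a 1 2 * a 3 1 + (8/3) * a 1 2 * a 3 2 + 3 * a 1 2 * a 3 3 + 2 * a 1 3 * a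 3 1 + 3 * a 1 3 * a 3 2 + (18/5) * a 1 3 * a 3 3 + 1 * a 2 1 ^ 2 + 2 * a 2 1 * a 2 2 + 2 * a 2 1 * a 2 3 + (4/3) * a 2 2 ^ 2 + 3 * a 2 2 * a 2 3 + (9/5) * a 2 3 ^ 2 + 9 * a 3 0 ^ 2 + 9 * a 3 0 * a 3 1 + 6 * a 3 0 * a 3 2 + (9/2) * a 3 0 * a 3 3 + 3 * a 3 1 ^ 2 + (9/2) * a 3 1 * a 3 2 + (18/5) * a 3 1 * a 3 3 + (9/5) * a 3 2 ^ 2 + 3 * a 3 2 * a 3 3 + (9/7) * a 3 3 ^ 2) * x ^ 4 + (2 * a 2 1 * a 3 1 + 2 * a 2 1 * a 3 2 + 2 * a 2 1 * a 3 3 + 2 * a 2 2 * a 3 1 + (8/3) * a 2 2 * a 3 2 + 3 * a 2 2 * a 3 3 + 2 * a 2 3 * a 3 1 + 3 * a 2 3 * a 3 2 + (18/5) * a 2 3 * a 3 3) * x ^ 5 + (1 * a 3 1 ^ 2 + 2 * a 3 1 * a 3 2 + 2 * a 3 1 * a 3 3 + (4/3) * a 3 2 ^ 2 + 3 * a 3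 2 * a 3 3 + (9/5) * a 3 3 ^ 2) * x ^ 6 := by
    intro x
    have h : ∀ y : ℝ, gradSq p x y = ((1 * a 0 1 ^ 2 + 1 * a 1 0 ^ 2) + (2 * a 0 1 * a 1 1 + 4 * a 1 0 * a 2 0) * x + (2 * a 0 1 * a 2 1 + 6 * a 1 0 * a 3 0 + 1 * a 1 1 ^ 2 + 4 * a 2 0 ^ 2) * x ^ 2 + (2 * a 0 1 * a 3 1 + 2 * a 1 1 * a 2 1 + 12 * a 2 0 * a 3 0) * x ^ 3 + (2 * a 1 1 * a 3 1 + 1 * a 2 1 ^ 2 + 9 * a 3 0 ^ 2) * x ^ 4 + (2 * a 2 1 * a 3 1) * x ^ 5 + (1 * a 3 1 ^ 2) * x ^ 6) + ((4 * a 0 1 * a 0 2 + 2 * a 1 0 * a 1 1) + (4 * a 0 1 * a 1 2 + 4 * a 0 2 * a 1 1 + 4 * a 1 0 * a 2 1 + 4 * a 1 1 * a 2 0) * x + (4 * a 0 1 * a 2 2 + 4 * a 0 2 * a 2 1 + 6 * a 1 0 * a 3 1 + 4 * a 1 1 * a 1 2 + 6 * a 1 1 * a 3 0 + 8 * a 2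 0 * a 2 1) * x ^ 2 + (4 * a 0 1 * a 3 2 + 4 * a 0 2 * a 3 1 + 4 * a 1 1 * a 2 2 + 4 * a 1 2 * a 2 1 + 12 * a 2 0 * a 3 1 + 12 * a 2 1 * a 3 0) * x ^ 3 + (4 * a 1 1 * a 3 2 + 4 * a 1 2 * a 3 1 + 4 * a 2 1 * a 2 2 + 18 * a 3 0 * a 3 1) * x ^ 4 + (4 * a 2 1 * a 3 2 + 4 * a 2 2 * a 3 1) * x ^ 5 + (4 * a 3 1 * a 3 2) * x ^ 6) * y + ((6 * a 0 1 * a 0 3 + 4 * a 0 2 ^ 2 + 2 * a 1 0 * a 1 2 + 1 * a 1 1 ^ 2) + (6 * a 0 1 * a 1 3 + 8 * a 0 2 * a 1 2 + 6 * a 0 3 * a 1 1 + 4 * a 1 0 * a 2 2 + 4 * a 1 1 * a 2 1 + 4 * a 1 2 * a 2 0) * x + (6 * a 0 1 * a 2 3 + 8 * a 0 2 * a 2 2 + 6 * a 0 3 * a 2 1 + 6 * a 1 0 * a 3 2 + 6 * a 1 1 * a 1 3 + 6 * a 1 1 * a 3 1 + 4 * a 1 2 ^ 2 + 6 * a 1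 2 * a 3 0 + 8 * a 2 0 * a 2 2 + 4 * a 2 1 ^ 2) * x ^ 2 + (6 * a 0 1 * a 3 3 + 8 * a 0 2 * a 3 2 + 6 * a 0 3 * a 3 1 + 6 * a 1 1 * a 2 3 + 8 * a 1 2 * a 2 2 + 6 * a 1 3 * a 2 1 + 12 * a 2 0 * a 3 2 + 12 * a 2 1 * a 3 1 + 12 * a 2 2 * a 3 0) * x ^ 3 + (6 * a 1 1 * a 3 3 + 8 * a 1 2 * a 3 2 + 6 * a 1 3 * a 3 1 + 6 * a 2 1 * a 2 3 + 4 * a 2 2 ^ 2 + 18 * a 3 0 * a 3 2 + 9 * a 3 1 ^ 2) * x ^ 4 + (6 * a 2 1 * a 3 3 + 8 * a 2 2 * a 3 2 + 6 * a 2 3 * a 3 1) * x ^ 5 + (6 * a 3 1 * a 3 3 + 4 * a 3 2 ^ 2) * x ^ 6) * y ^ 2 + ((12 * a 0 2 * a 0 3 + 2 * a 1 0 * a 1 3 + 2 * a 1 1 * a 1 2) + (12 * a 0 2 * a 1 3 + 12 * a 0 3 * a 1 2 + 4 * a 1 0 * a 2 3 + 4 * a 1 1 * a 2 2 + 4 *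 a 1 2 * a 2 1 + 4 * a 1 3 * a 2 0) * x + (12 * a 0 2 * a 2 3 + 12 * a 0 3 * a 2 2 + 6 * a 1 0 * a 3 3 + 6 * a 1 1 * a 3 2 + 12 * a 1 2 * a 1 3 + 6 * a 1 2 * a 3 1 + 6 * a 1 3 * a 3 0 + 8 * a 2 0 * a 2 3 + 8 * a 2 1 * a 2 2) * x ^ 2 + (12 * a 0 2 * a 3 3 + 12 * a 0 3 * a 3 2 + 12 * a 1 2 * a 2 3 + 12 * a 1 3 * a 2 2 + 12 * a 2 0 * a 3 3 + 12 * a 2 1 * a 3 2 + 12 * a 2 2 * a 3 1 + 12 * a 2 3 * a 3 0) * x ^ 3 + (12 * a 1 2 * a 3 3 + 12 * a 1 3 * a 3 2 + 12 * a 2 2 * a 2 3 + 18 * a 3 0 * a 3 3 + 18 * a 3 1 * a 3 2) * x ^ 4 + (12 * a 2 2 * a 3 3 + 12 * a 2 3 * a 3 2) * x ^ 5 + (12 * a 3 2 * a 3 3) * x ^ 6) * y ^ 3 + ((9 * a 0 3 ^ 2 + 2 * a 1 1 * a 1 3 + 1 * a 1 2 ^ 2) + (18 * a 0 3 * a 1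 3 + 4 * a 1 1 * a 2 3 + 4 * a 1 2 * a 2 2 + 4 * a 1 3 * a 2 1) * x + (18 * a 0 3 * a 2 3 + 6 * a 1 1 * a 3 3 + 6 * a 1 2 * a 3 2 + 9 * a 1 3 ^ 2 + 6 * a 1 3 * a 3 1 + 8 * a 2 1 * a 2 3 + 4 * a 2 2 ^ 2) * x ^ 2 + (18 * a 0 3 * a 3 3 + 18 * a 1 3 * a 2 3 + 12 * a 2 1 * a 3 3 + 12 * a 2 2 * a 3 2 + 12 * a 2 3 * a 3 1) * x ^ 3 + (18 * a 1 3 * a 3 3 + 9 * a 2 3 ^ 2 + 18 * a 3 1 * a 3 3 + 9 * a 3 2 ^ 2) * x ^ 4 + (18 * a 2 3 * a 3 3) * x ^ 5 + (9 * a 3 3 ^ 2) * x ^ 6) * y ^ 4 + ((2 * a 1 2 * a 1 3) + (4 * a 1 2 * a 2 3 + 4 * a 1 3 * a 2 2) * x + (6 * a 1 2 * a 3 3 + 6 * a 1 3 * a 3 2 + 8 * a 2 2 * a 2 3) * x ^ 2 + (12 * a 2 2 * a 3 3 + 12 * a 2 3 * a 3 2) * x ^ 3 + (18 * a 3 2 *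 a 3 3) * x ^ 4) * y ^ 5 + ((1 * a 1 3 ^ 2) + (4 * a 1 3 * a 2 3) * x + (6 * a 1 3 * a 3 3 + 4 * a 2 3 ^ 2) * x ^ 2 + (12 * a 2 3 * a 3 3) * x ^ 3 + (9 * a 3 3 ^ 2) * x ^ 4) * y ^ 6 := by
      intro y
      simp only [gradSq, hq0, hq1]
      ring
    simp only [h]
    rw [ipoly]
    ring
  have eA : (∫ x in (0:ℝ)..1, ∫ y in (0:ℝ)..1, gradSq p x y) = 1 * a 0 1 ^ 2 + 2 * a 0 1 * a 0 2 + 2 * a 0 1 * a 0 3 + 1 * a 0 1 * a 1 1 + 1 * a 0 1 * a 1 2 + 1 * a 0 1 * a 1 3 + (2/3) * a 0 1 * a 2 1 + (2/3) * a 0 1 * a 2 2 + (2/3) * a 0 1 * a 2 3 + (1/2) * a 0 1 * a 3 1 + (1/2) * a 0 1 * a 3 2 + (1/2) * a 0 1 * a 3 3 + (4/3) * a 0 2 ^ 2 + 3 * a 0 2 * a 0 3 + 1 * a 0 2 * a 1 1 + (4/3) * a 0 2 * a 1 2 + (3/2) * a 0 2 * a 1 3 + (2/3) * a 0 2 * a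 2 1 + (8/9) * a 0 2 * a 2 2 + 1 * a 0 2 * a 2 3 + (1/2) * a 0 2 * a 3 1 + (2/3) * a 0 2 * a 3 2 + (3/4) * a 0 2 * a 3 3 + (9/5) * a 0 3 ^ 2 + 1 * a 0 3 * a 1 1 + (3/2) * a 0 3 * a 1 2 + (9/5) * a 0 3 * a 1 3 + (2/3) * a 0 3 * a 2 1 + 1 * a 0 3 * a 2 2 + (6/5) * a 0 3 * a 2 3 + (1/2) * a 0 3 * a 3 1 + (3/4) * a 0 3 * a 3 2 + (9/10) * a 0 3 * a 3 3 + 1 * a 1 0 ^ 2 + 1 * a 1 0 * a 1 1 + (2/3) * a 1 0 * a 1 2 + (1/2) * a 1 0 * a 1 3 + 2 * a 1 0 * a 2 0 + 1 * a 1 0 * a 2 1 + (2/3) * a 1 0 * a 2 2 + (1/2) * a 1 0 * a 2 3 + 2 * a 1 0 * a 3 0 + 1 * a 1 0 * a 3 1 + (2/3) * a 1 0 * a 3 2 + (1/2) * a 1 0 * a 3 3 + (2/3) * a 1 1 ^ 2 + (7/6) * a 1 1 * a 1 2 + (16/15) * a 1 1 * a 1 3 + 1 * a 1 1 * a 2 0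 + (7/6) * a 1 1 * a 2 1 + 1 * a 1 1 * a 2 2 + (9/10) * a 1 1 * a 2 3 + 1 * a 1 1 * a 3 0 + (16/15) * a 1 1 * a 3 1 + (9/10) * a 1 1 * a 3 2 + (4/5) * a 1 1 * a 3 3 + (29/45) * a 1 2 ^ 2 + (4/3) * a 1 2 * a 1 3 + (2/3) * a 1 2 * a 2 0 + 1 * a 1 2 * a 2 1 + (16/15) * a 1 2 * a 2 2 + (13/12) * a 1 2 * a 2 3 + (2/3) * a 1 2 * a 3 0 + (9/10) * a 1 2 * a 3 1 + (14/15) * a 1 2 * a 3 2 + (14/15) * a 1 2 * a 3 3 + (26/35) * a 1 3 ^ 2 + (1/2) * a 1 3 * a 2 0 + (9/10) * a 1 3 * a 2 1 + (13/12) * a 1 3 * a 2 2 + (83/70) * a 1 3 * a 2 3 + (1/2) * a 1 3 * a 3 0 + (4/5) * a 1 3 * a 3 1 + (14/15) * a 1 3 * a 3 2 + (176/175) * a 1 3 * a 3 3 + (4/3) * a 2 0 ^ 2 + (4/3) * a 2 0 * a 2 1 + (8/9) * a 2 0 * a 2 2 + (2/3) * a 2 0 * a 2 3 + 3 * a 2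 0 * a 3 0 + (3/2) * a 2 0 * a 3 1 + 1 * a 2 0 * a 3 2 + (3/4) * a 2 0 * a 3 3 + (29/45) * a 2 1 ^ 2 + (16/15) * a 2 1 * a 2 2 + (14/15) * a 2 1 * a 2 3 + (3/2) * a 2 1 * a 3 0 + (4/3) * a 2 1 * a 3 1 + (13/12) * a 2 1 * a 3 2 + (14/15) * a 2 1 * a 3 3 + (8/15) * a 2 2 ^ 2 + (47/45) * a 2 2 * a 2 3 + 1 * a 2 2 * a 3 0 + (13/12) * a 2 2 * a 3 1 + (47/45) * a 2 2 * a 3 2 + 1 * a 2 2 * a 3 3 + (289/525) * a 2 3 ^ 2 + (3/4) * a 2 3 * a 3 0 + (14/15) * a 2 3 * a 3 1 + 1 * a 2 3 * a 3 2 + (36/35) * a 2 3 * a 3 3 + (9/5) * a 3 0 ^ 2 + (9/5) * a 3 0 * a 3 1 + (6/5) * a 3 0 * a 3 2 + (9/10) * a 3 0 * a 3 3 + (26/35) * a 3 1 ^ 2 + (83/70) * a 3 1 * a 3 2 + (176/175) * a 3 1 * a 3 3 + (289/525) * a 3 2 ^ 2 + (36/35) * a 3 2 * a 3 3 + (18/35)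 * a 3 3 ^ 2 := by
    simp only [hin]
    rw [ipoly]
    ring
  rw [e1, e2, e3, e4, eA]
  constructor
  · have key : ((1 * a 0 1 ^ 2 + 1 * a 0 1 * a 1 1 + (2/3) * a 0 1 * a 2 1 + (1/2) * a 0 1 * a 3 1 + 1 * a 1 0 ^ 2 + 2 * a 1 0 * a 2 0 + 2 * a 1 0 * a 3 0 + (1/3) * a 1 1 ^ 2 + (1/2) * a 1 1 * a 2 1 + (2/5) * a 1 1 * a 3 1 + (4/3) * a 2 0 ^ 2 + 3 * a 2 0 * a 3 0 + (1/5) * a 2 1 ^ 2 + (1/3) * a 2 1 * a 3 1 + (9/5) * a 3 0 ^ 2 + (1/7) * a 3 1 ^ 2) + (1 * a 0 1 ^ 2 + 4 * a 0 1 * a 0 2 + 6 * a 0 1 * a 0 3 + 1 * a 0 1 * a 1 1 + 2 * a 0 1 * a 1 2 + 3 * a 0 1 * a 1 3 + (2/3) * a 0 1 * a 2 1 + (4/3) * a 0 1 * a 2 2 + 2 * a 0 1 * a 2 3 + (1/2) * a 0 1 * a 3 1 + 1 * a 0 1 * a 3 2 + (3/2) * a 0 1 * a 3 3 + 4 * a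 0 2 ^ 2 + 12 * a 0 2 * a 0 3 + 2 * a 0 2 * a 1 1 + 4 * a 0 2 * a 1 2 + 6 * a 0 2 * a 1 3 + (4/3) * a 0 2 * a 2 1 + (8/3) * a 0 2 * a 2 2 + 4 * a 0 2 * a 2 3 + 1 * a 0 2 * a 3 1 + 2 * a 0 2 * a 3 2 + 3 * a 0 2 * a 3 3 + 9 * a 0 3 ^ 2 + 3 * a 0 3 * a 1 1 + 6 * a 0 3 * a 1 2 + 9 * a 0 3 * a 1 3 + 2 * a 0 3 * a 2 1 + 4 * a 0 3 * a 2 2 + 6 * a 0 3 * a 2 3 + (3/2) * a 0 3 * a 3 1 + 3 * a 0 3 * a 3 2 + (9/2) * a 0 3 * a 3 3 + 1 * a 1 0 ^ 2 + 2 * a 1 0 * a 1 1 + 2 * a 1 0 * a 1 2 + 2 * a 1 0 * a 1 3 + 2 * a 1 0 * a 2 0 + 2 * a 1 0 * a 2 1 + 2 * a 1 0 * a 2 2 + 2 * a 1 0 * a 2 3 + 2 * a 1 0 * a 3 0 + 2 * a 1 0 * a 3 1 + 2 * a 1 0 * a 3 2 + 2 * a 1 0 * a 3 3 + (4/3) *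 a 1 1 ^ 2 + (10/3) * a 1 1 * a 1 2 + 4 * a 1 1 * a 1 3 + 2 * a 1 1 * a 2 0 + (5/2) * a 1 1 * a 2 1 + 3 * a 1 1 * a 2 2 + (7/2) * a 1 1 * a 2 3 + 2 * a 1 1 * a 3 0 + (12/5) * a 1 1 * a 3 1 + (14/5) * a 1 1 * a 3 2 + (16/5) * a 1 1 * a 3 3 + (7/3) * a 1 2 ^ 2 + 6 * a 1 2 * a 1 3 + 2 * a 1 2 * a 2 0 + 3 * a 1 2 * a 2 1 + 4 * a 1 2 * a 2 2 + 5 * a 1 2 * a 2 3 + 2 * a 1 2 * a 3 0 + (14/5) * a 1 2 * a 3 1 + (18/5) * a 1 2 * a 3 2 + (22/5) * a 1 2 * a 3 3 + 4 * a 1 3 ^ 2 + 2 * a 1 3 * a 2 0 + (7/2) * a 1 3 * a 2 1 + 5 * a 1 3 * a 2 2 + (13/2) * a 1 3 * a 2 3 + 2 * a 1 3 * a 3 0 + (16/5) * a 1 3 * a 3 1 + (22/5) * a 1 3 * a 3 2 + (28/5) * a 1 3 * a 3 3 + (4/3) * a 2 0 ^ 2 + (8/3) * a 2 0 * a 2 1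 + (8/3) * a 2 0 * a 2 2 + (8/3) * a 2 0 * a 2 3 + 3 * a 2 0 * a 3 0 + 3 * a 2 0 * a 3 1 + 3 * a 2 0 * a 3 2 + 3 * a 2 0 * a 3 3 + (23/15) * a 2 1 ^ 2 + (52/15) * a 2 1 * a 2 2 + (58/15) * a 2 1 * a 2 3 + 3 * a 2 1 * a 3 0 + (10/3) * a 2 1 * a 3 1 + (11/3) * a 2 1 * a 3 2 + 4 * a 2 1 * a 3 3 + (32/15) * a 2 2 ^ 2 + (76/15) * a 2 2 * a 2 3 + 3 * a 2 2 * a 3 0 + (11/3) * a 2 2 * a 3 1 + (13/3) * a 2 2 * a 3 2 + 5 * a 2 2 * a 3 3 + (47/15) * a 2 3 ^ 2 + 3 * a 2 3 * a 3 0 + 4 * a 2 3 * a 3 1 + 5 * a 2 3 * a 3 2 + 6 * a 2 3 * a 3 3 + (9/5) * a 3 0 ^ 2 + (18/5) * a 3 0 * a 3 1 + (18/5) * a 3 0 * a 3 2 + (18/5) * a 3 0 * a 3 3 + (68/35) * a 3 1 ^ 2 + (146/35) * a 3 1 * a 3 2 + (156/35) * a 3 1 * a 3 3 + (83/35) * a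 3 2 ^ 2 + (186/35) * a 3 2 * a 3 3 + (108/35) * a 3 3 ^ 2) + (1 * a 0 1 ^ 2 + 2 * a 0 1 * a 0 2 + 2 * a 0 1 * a 0 3 + (4/3) * a 0 2 ^ 2 + 3 * a 0 2 * a 0 3 + (9/5) * a 0 3 ^ 2 + 1 * a 1 0 ^ 2 + 1 * a 1 0 * a 1 1 + (2/3) * a 1 0 * a 1 2 + (1/2) * a 1 0 * a 1 3 + (1/3) * a 1 1 ^ 2 + (1/2) * a 1 1 * a 1 2 + (2/5) * a 1 1 * a 1 3 + (1/5) * a 1 2 ^ 2 + (1/3) * a 1 2 * a 1 3 + (1/7) * a 1 3 ^ 2) + (1 * a 0 1 ^ 2 + 2 * a 0 1 * a 0 2 + 2 * a 0 1 * a 0 3 + 2 * a 0 1 * a 1 1 + 2 * a 0 1 * a 1 2 + 2 * a 0 1 * a 1 3 + 2 * a 0 1 * a 2 1 + 2 * a 0 1 * a 2 2 + 2 * a 0 1 * a 2 3 + 2 * a 0 1 * a 3 1 + 2 * a 0 1 * a 3 2 + 2 * a 0 1 * a 3 3 + (4/3) * a 0 2 ^ 2 + 3 * a 0 2 * a 0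 3 + 2 * a 0 2 * a 1 1 + (8/3) * a 0 2 * a 1 2 + 3 * a 0 2 * a 1 3 + 2 * a 0 2 * a 2 1 + (8/3) * a 0 2 * a 2 2 + 3 * a 0 2 * a 2 3 + 2 * a 0 2 * a 3 1 + (8/3) * a 0 2 * a 3 2 + 3 * a 0 2 * a 3 3 + (9/5) * a 0 3 ^ 2 + 2 * a 0 3 * a 1 1 + 3 * a 0 3 * a 1 2 + (18/5) * a 0 3 * a 1 3 + 2 * a 0 3 * a 2 1 + 3 * a 0 3 * a 2 2 + (18/5) * a 0 3 * a 2 3 + 2 * a 0 3 * a 3 1 + 3 * a 0 3 * a 3 2 + (18/5) * a 0 3 * a 3 3 + 1 * a 1 0 ^ 2 + 1 * a 1 0 * a 1 1 + (2/3) * a 1 0 * a 1 2 + (1/2) * a 1 0 * a 1 3 + 4 * a 1 0 * a 2 0 + 2 * a 1 0 * a 2 1 + (4/3) * a 1 0 * a 2 2 + 1 * a 1 0 * a 2 3 + 6 * a 1 0 * a 3 0 + 3 * a 1 0 * a 3 1 + 2 * a 1 0 * a 3 2 + (3/2) * a 1 0 * a 3 3 + (4/3) * a 1 1 ^ 2 +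 (5/2) * a 1 1 * a 1 2 + (12/5) * a 1 1 * a 1 3 + 2 * a 1 1 * a 2 0 + (10/3) * a 1 1 * a 2 1 + 3 * a 1 1 * a 2 2 + (14/5) * a 1 1 * a 2 3 + 3 * a 1 1 * a 3 0 + 4 * a 1 1 * a 3 1 + (7/2) * a 1 1 * a 3 2 + (16/5) * a 1 1 * a 3 3 + (23/15) * a 1 2 ^ 2 + (10/3) * a 1 2 * a 1 3 + (4/3) * a 1 2 * a 2 0 + 3 * a 1 2 * a 2 1 + (52/15) * a 1 2 * a 2 2 + (11/3) * a 1 2 * a 2 3 + 2 * a 1 2 * a 3 0 + (7/2) * a 1 2 * a 3 1 + (58/15) * a 1 2 * a 3 2 + 4 * a 1 2 * a 3 3 + (68/35) * a 1 3 ^ 2 + 1 * a 1 3 * a 2 0 + (14/5) * a 1 3 * a 2 1 + (11/3) * a 1 3 * a 2 2 + (146/35) * a 1 3 * a 2 3 + (3/2) * a 1 3 * a 3 0 + (16/5) * a 1 3 * a 3 1 + 4 * a 1 3 * a 3 2 + (156/35) * a 1 3 * a 3 3 + 4 * a 2 0 ^ 2 + 4 * a 2 0 * a 2 1 + (8/3)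 * a 2 0 * a 2 2 + 2 * a 2 0 * a 2 3 + 12 * a 2 0 * a 3 0 + 6 * a 2 0 * a 3 1 + 4 * a 2 0 * a 3 2 + 3 * a 2 0 * a 3 3 + (7/3) * a 2 1 ^ 2 + 4 * a 2 1 * a 2 2 + (18/5) * a 2 1 * a 2 3 + 6 * a 2 1 * a 3 0 + 6 * a 2 1 * a 3 1 + 5 * a 2 1 * a 3 2 + (22/5) * a 2 1 * a 3 3 + (32/15) * a 2 2 ^ 2 + (13/3) * a 2 2 * a 2 3 + 4 * a 2 2 * a 3 0 + 5 * a 2 2 * a 3 1 + (76/15) * a 2 2 * a 3 2 + 5 * a 2 2 * a 3 3 + (83/35) * a 2 3 ^ 2 + 3 * a 2 3 * a 3 0 + (22/5) * a 2 3 * a 3 1 + 5 * a 2 3 * a 3 2 + (186/35) * a 2 3 * a 3 3 + 9 * a 3 0 ^ 2 + 9 * a 3 0 * a 3 1 + 6 * a 3 0 * a 3 2 + (9/2) * a 3 0 * a 3 3 + 4 * a 3 1 ^ 2 + (13/2) * a 3 1 * a 3 2 + (28/5) * a 3 1 * a 3 3 + (47/15) * a 3 2 ^ 2 + 6 * a 3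 2 * a 3 3 + (108/35) * a 3 3 ^ 2)) - 1 * (1 * a 0 1 ^ 2 + 2 * a 0 1 * a 0 2 + 2 * a 0 1 * a 0 3 + 1 * a 0 1 * a 1 1 + 1 * a 0 1 * a 1 2 + 1 * a 0 1 * a 1 3 + (2/3) * a 0 1 * a 2 1 + (2/3) * a 0 1 * a 2 2 + (2/3) * a 0 1 * a 2 3 + (1/2) * a 0 1 * a 3 1 + (1/2) * a 0 1 * a 3 2 + (1/2) * a 0 1 * a 3 3 + (4/3) * a 0 2 ^ 2 + 3 * a 0 2 * a 0 3 + 1 * a 0 2 * a 1 1 + (4/3) * a 0 2 * a 1 2 + (3/2) * a 0 2 * a 1 3 + (2/3) * a 0 2 * a 2 1 + (8/9) * a 0 2 * a 2 2 + 1 * a 0 2 * a 2 3 + (1/2) * a 0 2 * a 3 1 + (2/3) * a 0 2 * a 3 2 + (3/4) * a 0 2 * a 3 3 + (9/5) * a 0 3 ^ 2 + 1 * a 0 3 * a 1 1 + (3/2) * a 0 3 * a 1 2 + (9/5) * a 0 3 * a 1 3 + (2/3) * a 0 3 * a 2 1 + 1 * a 0 3 * a 2 2 + (6/5) * a 0 3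 * a 2 3 + (1/2) * a 0 3 * a 3 1 + (3/4) * a 0 3 * a 3 2 + (9/10) * a 0 3 * a 3 3 + 1 * a 1 0 ^ 2 + 1 * a 1 0 * a 1 1 + (2/3) * a 1 0 * a 1 2 + (1/2) * a 1 0 * a 1 3 + 2 * a 1 0 * a 2 0 + 1 * a 1 0 * a 2 1 + (2/3) * a 1 0 * a 2 2 + (1/2) * a 1 0 * a 2 3 + 2 * a 1 0 * a 3 0 + 1 * a 1 0 * a 3 1 + (2/3) * a 1 0 * a 3 2 + (1/2) * a 1 0 * a 3 3 + (2/3) * a 1 1 ^ 2 + (7/6) * a 1 1 * a 1 2 + (16/15) * a 1 1 * a 1 3 + 1 * a 1 1 * a 2 0 + (7/6) * a 1 1 * a 2 1 + 1 * a 1 1 * a 2 2 + (9/10) * a 1 1 * a 2 3 + 1 * a 1 1 * a 3 0 + (16/15) * a 1 1 * a 3 1 + (9/10) * a 1 1 * a 3 2 + (4/5) * a 1 1 * a 3 3 + (29/45) * a 1 2 ^ 2 + (4/3) * a 1 2 * a 1 3 + (2/3) * a 1 2 * a 2 0 + 1 * a 1 2 * a 2 1 + (16/15) * a 1 2 * a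 2 2 + (13/12) * a 1 2 * a 2 3 + (2/3) * a 1 2 * a 3 0 + (9/10) * a 1 2 * a 3 1 + (14/15) * a 1 2 * a 3 2 + (14/15) * a 1 2 * a 3 3 + (26/35) * a 1 3 ^ 2 + (1/2) * a 1 3 * a 2 0 + (9/10) * a 1 3 * a 2 1 + (13/12) * a 1 3 * a 2 2 + (83/70) * a 1 3 * a 2 3 + (1/2) * a 1 3 * a 3 0 + (4/5) * a 1 3 * a 3 1 + (14/15) * a 1 3 * a 3 2 + (176/175) * a 1 3 * a 3 3 + (4/3) * a 2 0 ^ 2 + (4/3) * a 2 0 * a 2 1 + (8/9) * a 2 0 * a 2 2 + (2/3) * a 2 0 * a 2 3 + 3 * a 2 0 * a 3 0 + (3/2) * a 2 0 * a 3 1 + 1 * a 2 0 * a 3 2 + (3/4) * a 2 0 * a 3 3 + (29/45) * a 2 1 ^ 2 + (16/15) * a 2 1 * a 2 2 + (14/15) * a 2 1 * a 2 3 + (3/2) * a 2 1 * a 3 0 + (4/3) * a 2 1 * a 3 1 + (13/12) * a 2 1 * a 3 2 + (14/15) * a 2 1 * a 3 3 + (8/15) * a 2 2 ^ 2 + (47/45)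 * a 2 2 * a 2 3 + 1 * a 2 2 * a 3 0 + (13/12) * a 2 2 * a 3 1 + (47/45) * a 2 2 * a 3 2 + 1 * a 2 2 * a 3 3 + (289/525) * a 2 3 ^ 2 + (3/4) * a 2 3 * a 3 0 + (14/15) * a 2 3 * a 3 1 + 1 * a 2 3 * a 3 2 + (36/35) * a 2 3 * a 3 3 + (9/5) * a 3 0 ^ 2 + (9/5) * a 3 0 * a 3 1 + (6/5) * a 3 0 * a 3 2 + (9/10) * a 3 0 * a 3 3 + (26/35) * a 3 1 ^ 2 + (83/70) * a 3 1 * a 3 2 + (176/175) * a 3 1 * a 3 3 + (289/525) * a 3 2 ^ 2 + (36/35) * a 3 2 * a 3 3 + (18/35) * a 3 3 ^ 2) = 3 * (1 * a 0 1 + 1 * a 0 2 + (4/3) * a 0 3 + (1/2) * a 1 1 + (1/2) * a 1 2 + (2/3) * a 1 3 + (4/9) * a 2 1 + (4/9) * a 2 2 + (5/9) * a 2 3 + (5/12) * a 3 1 + (5/12) * a 3 2 + (1/2) * a 3 3) ^ 2 + (7/3) * (1 * a 0 2 + (3/2) * a 0 3 + (1/2) * a 1 2 + (3/4) * a 1 3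 + (8/21) * a 2 2 + (4/7) * a 2 3 + (9/28) * a 3 2 + (27/56) * a 3 3) ^ 2 + (13/60) * (1 * a 0 3 + (1/2) * a 1 3 + ((-20)/39) * a 2 1 + ((-20)/39) * a 2 2 + ((-4)/39) * a 2 3 + ((-10)/13) * a 3 1 + ((-10)/13) * a 3 2 + ((-21)/52) * a 3 3) ^ 2 + 3 * (1 * a 1 0 + (1/2) * a 1 1 + (4/9) * a 1 2 + (5/12) * a 1 3 + 1 * a 2 0 + (1/2) * a 2 1 + (4/9) * a 2 2 + (5/12) * a 2 3 + (4/3) * a 3 0 + (2/3) * a 3 1 + (5/9) * a 3 2 + (1/2) * a 3 3) ^ 2 + (7/6) * (1 * a 1 1 + 1 * a 1 2 + (149/140) * a 1 3 + 1 * a 2 1 + 1 * a 2 2 + (149/140) * a 2 3 + (149/140) * a 3 1 + (149/140) * a 3 2 + (39/35) * a 3 3) ^ 2 + (89/270) * (1 * a 1 2 + (3/2) * a 1 3 + 1 * a 2 2 + (3/2) * a 2 3 + ((-30)/89) * a 3 0 + ((-15)/89) * a 3 1 + (307/356) * a 3 2 + (981/712) * a 3 3) ^ 2 + (989/16800) *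 (1 * a 1 3 + 1 * a 2 3 + ((-361)/989) * a 3 1 + ((-361)/989) * a 3 2 + (603/989) * a 3 3) ^ 2 + (7/3) * (1 * a 2 0 + (1/2) * a 2 1 + (8/21) * a 2 2 + (9/28) * a 2 3 + (3/2) * a 3 0 + (3/4) * a 3 1 + (4/7) * a 3 2 + (27/56) * a 3 3) ^ 2 + (319/1170) * (1 * a 2 1 + 1 * a 2 2 + (1277/1276) * a 2 3 + (3/2) * a 3 1 + (3/2) * a 3 2 + (3831/2552) * a 3 3) ^ 2 + (17/378) * (1 * a 2 2 + (3/2) * a 2 3 + (3/2) * a 3 2 + (9/4) * a 3 3) ^ 2 + (96139/16077600) * (1 * a 2 3 + (3/2) * a 3 3) ^ 2 + (319/1780) * (1 * a 3 0 + (1/2) * a 3 1 + (131/319) * a 3 2 + (467/1276) * a 3 3) ^ 2 + (1413/27692) * (1 * a 3 1 + 1 * a 3 2 + (603/628) * a 3 3) ^ 2 + (96139/16077600) * (1 * a 3 2 + (3/2) * a 3 3) ^ 2 + (1257/1758400) * (1 * a 3 3) ^ 2 := by ring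
    have hnn : (0:ℝ) ≤ 3 * (1 * a 0 1 + 1 * a 0 2 + (4/3) * a 0 3 + (1/2) * a 1 1 + (1/2) * a 1 2 + (2/3) * a 1 3 + (4/9) * a 2 1 + (4/9) * a 2 2 + (5/9) * a 2 3 + (5/12) * a 3 1 + (5/12) * a 3 2 + (1/2) * a 3 3) ^ 2 + (7/3) * (1 * a 0 2 + (3/2) * a 0 3 + (1/2) * a 1 2 + (3/4) * a 1 3 + (8/21) * a 2 2 + (4/7) * a 2 3 + (9/28) * a 3 2 + (27/56) * a 3 3) ^ 2 + (13/60) * (1 * a 0 3 + (1/2) * a 1 3 + ((-20)/39) * a 2 1 + ((-20)/39) * a 2 2 + ((-4)/39) * a 2 3 + ((-10)/13) * a 3 1 + ((-10)/13) * a 3 2 + ((-21)/52) * a 3 3) ^ 2 + 3 * (1 * a 1 0 + (1/2) * a 1 1 + (4/9) * a 1 2 + (5/12) * a 1 3 + 1 * a 2 0 + (1/2) * a 2 1 + (4/9) * a 2 2 + (5/12) * a 2 3 + (4/3) * a 3 0 + (2/3) * a 3 1 + (5/9) * a 3 2 + (1/2) * a 3 3) ^ 2 + (7/6) * (1 * a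 1 1 + 1 * a 1 2 + (149/140) * a 1 3 + 1 * a 2 1 + 1 * a 2 2 + (149/140) * a 2 3 + (149/140) * a 3 1 + (149/140) * a 3 2 + (39/35) * a 3 3) ^ 2 + (89/270) * (1 * a 1 2 + (3/2) * a 1 3 + 1 * a 2 2 + (3/2) * a 2 3 + ((-30)/89) * a 3 0 + ((-15)/89) * a 3 1 + (307/356) * a 3 2 + (981/712) * a 3 3) ^ 2 + (989/16800) * (1 * a 1 3 + 1 * a 2 3 + ((-361)/989) * a 3 1 + ((-361)/989) * a 3 2 + (603/989) * a 3 3) ^ 2 + (7/3) * (1 * a 2 0 + (1/2) * a 2 1 + (8/21) * a 2 2 + (9/28) * a 2 3 + (3/2) * a 3 0 + (3/4) * a 3 1 + (4/7) * a 3 2 + (27/56) * a 3 3) ^ 2 + (319/1170) * (1 * a 2 1 + 1 * a 2 2 + (1277/1276) * a 2 3 + (3/2) * a 3 1 + (3/2) * a 3 2 + (3831/2552) * a 3 3) ^ 2 + (17/378) * (1 * a 2 2 + (3/2) * a 2 3 + (3/2) * a 3 2 + (9/4) * a 3 3) ^ 2 + (96139/16077600) * (1 * a 2 3 + (3/2)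 * a 3 3) ^ 2 + (319/1780) * (1 * a 3 0 + (1/2) * a 3 1 + (131/319) * a 3 2 + (467/1276) * a 3 3) ^ 2 + (1413/27692) * (1 * a 3 1 + 1 * a 3 2 + (603/628) * a 3 3) ^ 2 + (96139/16077600) * (1 * a 3 2 + (3/2) * a 3 3) ^ 2 + (1257/1758400) * (1 * a 3 3) ^ 2 := by positivity
    linarith
  · have key : 32 * (1 * a 0 1 ^ 2 + 2 * a 0 1 * a 0 2 + 2 * a 0 1 * a 0 3 + 1 * a 0 1 * a 1 1 + 1 * a 0 1 * a 1 2 + 1 * a 0 1 * a 1 3 + (2/3) * a 0 1 * a 2 1 + (2/3) * a 0 1 * a 2 2 + (2/3) * a 0 1 * a 2 3 + (1/2) * a 0 1 * a 3 1 + (1/2) * a 0 1 * a 3 2 + (1/2) * a 0 1 * a 3 3 + (4/3) * a 0 2 ^ 2 + 3 * a 0 2 * a 0 3 + 1 * a 0 2 * a 1 1 + (4/3) * a 0 2 * a 1 2 + (3/2) * a 0 2 * a 1 3 + (2/3) * a 0 2 * a 2 1 + (8/9) * a 0 2 * a 2 2 + 1 * a 0 2 * a 2 3 + (1/2) * a 0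 2 * a 3 1 + (2/3) * a 0 2 * a 3 2 + (3/4) * a 0 2 * a 3 3 + (9/5) * a 0 3 ^ 2 + 1 * a 0 3 * a 1 1 + (3/2) * a 0 3 * a 1 2 + (9/5) * a 0 3 * a 1 3 + (2/3) * a 0 3 * a 2 1 + 1 * a 0 3 * a 2 2 + (6/5) * a 0 3 * a 2 3 + (1/2) * a 0 3 * a 3 1 + (3/4) * a 0 3 * a 3 2 + (9/10) * a 0 3 * a 3 3 + 1 * a 1 0 ^ 2 + 1 * a 1 0 * a 1 1 + (2/3) * a 1 0 * a 1 2 + (1/2) * a 1 0 * a 1 3 + 2 * a 1 0 * a 2 0 + 1 * a 1 0 * a 2 1 + (2/3) * a 1 0 * a 2 2 + (1/2) * a 1 0 * a 2 3 + 2 * a 1 0 * a 3 0 + 1 * a 1 0 * a 3 1 + (2/3) * a 1 0 * a 3 2 + (1/2) * a 1 0 * a 3 3 + (2/3) * a 1 1 ^ 2 + (7/6) * a 1 1 * a 1 2 + (16/15) * a 1 1 * a 1 3 + 1 * a 1 1 * a 2 0 + (7/6) * a 1 1 * a 2 1 + 1 * a 1 1 * a 2 2 + (9/10) * a 1 1 *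 a 2 3 + 1 * a 1 1 * a 3 0 + (16/15) * a 1 1 * a 3 1 + (9/10) * a 1 1 * a 3 2 + (4/5) * a 1 1 * a 3 3 + (29/45) * a 1 2 ^ 2 + (4/3) * a 1 2 * a 1 3 + (2/3) * a 1 2 * a 2 0 + 1 * a 1 2 * a 2 1 + (16/15) * a 1 2 * a 2 2 + (13/12) * a 1 2 * a 2 3 + (2/3) * a 1 2 * a 3 0 + (9/10) * a 1 2 * a 3 1 + (14/15) * a 1 2 * a 3 2 + (14/15) * a 1 2 * a 3 3 + (26/35) * a 1 3 ^ 2 + (1/2) * a 1 3 * a 2 0 + (9/10) * a 1 3 * a 2 1 + (13/12) * a 1 3 * a 2 2 + (83/70) * a 1 3 * a 2 3 + (1/2) * a 1 3 * a 3 0 + (4/5) * a 1 3 * a 3 1 + (14/15) * a 1 3 * a 3 2 + (176/175) * a 1 3 * a 3 3 + (4/3) * a 2 0 ^ 2 + (4/3) * a 2 0 * a 2 1 + (8/9) * a 2 0 * a 2 2 + (2/3) * a 2 0 * a 2 3 + 3 * a 2 0 * a 3 0 + (3/2) * a 2 0 * a 3 1 + 1 * a 2 0 * a 3 2 + (3/4)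 * a 2 0 * a 3 3 + (29/45) * a 2 1 ^ 2 + (16/15) * a 2 1 * a 2 2 + (14/15) * a 2 1 * a 2 3 + (3/2) * a 2 1 * a 3 0 + (4/3) * a 2 1 * a 3 1 + (13/12) * a 2 1 * a 3 2 + (14/15) * a 2 1 * a 3 3 + (8/15) * a 2 2 ^ 2 + (47/45) * a 2 2 * a 2 3 + 1 * a 2 2 * a 3 0 + (13/12) * a 2 2 * a 3 1 + (47/45) * a 2 2 * a 3 2 + 1 * a 2 2 * a 3 3 + (289/525) * a 2 3 ^ 2 + (3/4) * a 2 3 * a 3 0 + (14/15) * a 2 3 * a 3 1 + 1 * a 2 3 * a 3 2 + (36/35) * a 2 3 * a 3 3 + (9/5) * a 3 0 ^ 2 + (9/5) * a 3 0 * a 3 1 + (6/5) * a 3 0 * a 3 2 + (9/10) * a 3 0 * a 3 3 + (26/35) * a 3 1 ^ 2 + (83/70) * a 3 1 * a 3 2 + (176/175) * a 3 1 * a 3 3 + (289/525) * a 3 2 ^ 2 + (36/35) * a 3 2 * a 3 3 + (18/35) * a 3 3 ^ 2) - ((1 * a 0 1 ^ 2 + 1 * a 0 1 * a 1 1 + (2/3)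 * a 0 1 * a 2 1 + (1/2) * a 0 1 * a 3 1 + 1 * a 1 0 ^ 2 + 2 * a 1 0 * a 2 0 + 2 * a 1 0 * a 3 0 + (1/3) * a 1 1 ^ 2 + (1/2) * a 1 1 * a 2 1 + (2/5) * a 1 1 * a 3 1 + (4/3) * a 2 0 ^ 2 + 3 * a 2 0 * a 3 0 + (1/5) * a 2 1 ^ 2 + (1/3) * a 2 1 * a 3 1 + (9/5) * a 3 0 ^ 2 + (1/7) * a 3 1 ^ 2) + (1 * a 0 1 ^ 2 + 4 * a 0 1 * a 0 2 + 6 * a 0 1 * a 0 3 + 1 * a 0 1 * a 1 1 + 2 * a 0 1 * a 1 2 + 3 * a 0 1 * a 1 3 + (2/3) * a 0 1 * a 2 1 + (4/3) * a 0 1 * a 2 2 + 2 * a 0 1 * a 2 3 + (1/2) * a 0 1 * a 3 1 + 1 * a 0 1 * a 3 2 + (3/2) * a 0 1 * a 3 3 + 4 * a 0 2 ^ 2 + 12 * a 0 2 * a 0 3 + 2 * a 0 2 * a 1 1 + 4 * a 0 2 * a 1 2 + 6 * a 0 2 * a 1 3 + (4/3) * a 0 2 * a 2 1 + (8/3) *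 a 0 2 * a 2 2 + 4 * a 0 2 * a 2 3 + 1 * a 0 2 * a 3 1 + 2 * a 0 2 * a 3 2 + 3 * a 0 2 * a 3 3 + 9 * a 0 3 ^ 2 + 3 * a 0 3 * a 1 1 + 6 * a 0 3 * a 1 2 + 9 * a 0 3 * a 1 3 + 2 * a 0 3 * a 2 1 + 4 * a 0 3 * a 2 2 + 6 * a 0 3 * a 2 3 + (3/2) * a 0 3 * a 3 1 + 3 * a 0 3 * a 3 2 + (9/2) * a 0 3 * a 3 3 + 1 * a 1 0 ^ 2 + 2 * a 1 0 * a 1 1 + 2 * a 1 0 * a 1 2 + 2 * a 1 0 * a 1 3 + 2 * a 1 0 * a 2 0 + 2 * a 1 0 * a 2 1 + 2 * a 1 0 * a 2 2 + 2 * a 1 0 * a 2 3 + 2 * a 1 0 * a 3 0 + 2 * a 1 0 * a 3 1 + 2 * a 1 0 * a 3 2 + 2 * a 1 0 * a 3 3 + (4/3) * a 1 1 ^ 2 + (10/3) * a 1 1 * a 1 2 + 4 * a 1 1 * a 1 3 + 2 * a 1 1 * a 2 0 + (5/2) * a 1 1 * a 2 1 + 3 * a 1 1 * a 2 2 + (7/2)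 * a 1 1 * a 2 3 + 2 * a 1 1 * a 3 0 + (12/5) * a 1 1 * a 3 1 + (14/5) * a 1 1 * a 3 2 + (16/5) * a 1 1 * a 3 3 + (7/3) * a 1 2 ^ 2 + 6 * a 1 2 * a 1 3 + 2 * a 1 2 * a 2 0 + 3 * a 1 2 * a 2 1 + 4 * a 1 2 * a 2 2 + 5 * a 1 2 * a 2 3 + 2 * a 1 2 * a 3 0 + (14/5) * a 1 2 * a 3 1 + (18/5) * a 1 2 * a 3 2 + (22/5) * a 1 2 * a 3 3 + 4 * a 1 3 ^ 2 + 2 * a 1 3 * a 2 0 + (7/2) * a 1 3 * a 2 1 + 5 * a 1 3 * a 2 2 + (13/2) * a 1 3 * a 2 3 + 2 * a 1 3 * a 3 0 + (16/5) * a 1 3 * a 3 1 + (22/5) * a 1 3 * a 3 2 + (28/5) * a 1 3 * a 3 3 + (4/3) * a 2 0 ^ 2 + (8/3) * a 2 0 * a 2 1 + (8/3) * a 2 0 * a 2 2 + (8/3) * a 2 0 * a 2 3 + 3 * a 2 0 * a 3 0 + 3 * a 2 0 * a 3 1 + 3 * a 2 0 * a 3 2 + 3 * a 2 0 * a 3 3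 + (23/15) * a 2 1 ^ 2 + (52/15) * a 2 1 * a 2 2 + (58/15) * a 2 1 * a 2 3 + 3 * a 2 1 * a 3 0 + (10/3) * a 2 1 * a 3 1 + (11/3) * a 2 1 * a 3 2 + 4 * a 2 1 * a 3 3 + (32/15) * a 2 2 ^ 2 + (76/15) * a 2 2 * a 2 3 + 3 * a 2 2 * a 3 0 + (11/3) * a 2 2 * a 3 1 + (13/3) * a 2 2 * a 3 2 + 5 * a 2 2 * a 3 3 + (47/15) * a 2 3 ^ 2 + 3 * a 2 3 * a 3 0 + 4 * a 2 3 * a 3 1 + 5 * a 2 3 * a 3 2 + 6 * a 2 3 * a 3 3 + (9/5) * a 3 0 ^ 2 + (18/5) * a 3 0 * a 3 1 + (18/5) * a 3 0 * a 3 2 + (18/5) * a 3 0 * a 3 3 + (68/35) * a 3 1 ^ 2 + (146/35) * a 3 1 * a 3 2 + (156/35) * a 3 1 * a 3 3 + (83/35) * a 3 2 ^ 2 + (186/35) * a 3 2 * a 3 3 + (108/35) * a 3 3 ^ 2) + (1 * a 0 1 ^ 2 + 2 * a 0 1 * a 0 2 + 2 * a 0 1 * a 0 3 + (4/3) * a 0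 2 ^ 2 + 3 * a 0 2 * a 0 3 + (9/5) * a 0 3 ^ 2 + 1 * a 1 0 ^ 2 + 1 * a 1 0 * a 1 1 + (2/3) * a 1 0 * a 1 2 + (1/2) * a 1 0 * a 1 3 + (1/3) * a 1 1 ^ 2 + (1/2) * a 1 1 * a 1 2 + (2/5) * a 1 1 * a 1 3 + (1/5) * a 1 2 ^ 2 + (1/3) * a 1 2 * a 1 3 + (1/7) * a 1 3 ^ 2) + (1 * a 0 1 ^ 2 + 2 * a 0 1 * a 0 2 + 2 * a 0 1 * a 0 3 + 2 * a 0 1 * a 1 1 + 2 * a 0 1 * a 1 2 + 2 * a 0 1 * a 1 3 + 2 * a 0 1 * a 2 1 + 2 * a 0 1 * a 2 2 + 2 * a 0 1 * a 2 3 + 2 * a 0 1 * a 3 1 + 2 * a 0 1 * a 3 2 + 2 * a 0 1 * a 3 3 + (4/3) * a 0 2 ^ 2 + 3 * a 0 2 * a 0 3 + 2 * a 0 2 * a 1 1 + (8/3) * a 0 2 * a 1 2 + 3 * a 0 2 * a 1 3 + 2 * a 0 2 * a 2 1 + (8/3) * a 0 2 * a 2 2 + 3 * a 0 2 * a 2 3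 + 2 * a 0 2 * a 3 1 + (8/3) * a 0 2 * a 3 2 + 3 * a 0 2 * a 3 3 + (9/5) * a 0 3 ^ 2 + 2 * a 0 3 * a 1 1 + 3 * a 0 3 * a 1 2 + (18/5) * a 0 3 * a 1 3 + 2 * a 0 3 * a 2 1 + 3 * a 0 3 * a 2 2 + (18/5) * a 0 3 * a 2 3 + 2 * a 0 3 * a 3 1 + 3 * a 0 3 * a 3 2 + (18/5) * a 0 3 * a 3 3 + 1 * a 1 0 ^ 2 + 1 * a 1 0 * a 1 1 + (2/3) * a 1 0 * a 1 2 + (1/2) * a 1 0 * a 1 3 + 4 * a 1 0 * a 2 0 + 2 * a 1 0 * a 2 1 + (4/3) * a 1 0 * a 2 2 + 1 * a 1 0 * a 2 3 + 6 * a 1 0 * a 3 0 + 3 * a 1 0 * a 3 1 + 2 * a 1 0 * a 3 2 + (3/2) * a 1 0 * a 3 3 + (4/3) * a 1 1 ^ 2 + (5/2) * a 1 1 * a 1 2 + (12/5) * a 1 1 * a 1 3 + 2 * a 1 1 * a 2 0 + (10/3) * a 1 1 * a 2 1 + 3 * a 1 1 * a 2 2 + (14/5) * a 1 1 * a 2 3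 + 3 * a 1 1 * a 3 0 + 4 * a 1 1 * a 3 1 + (7/2) * a 1 1 * a 3 2 + (16/5) * a 1 1 * a 3 3 + (23/15) * a 1 2 ^ 2 + (10/3) * a 1 2 * a 1 3 + (4/3) * a 1 2 * a 2 0 + 3 * a 1 2 * a 2 1 + (52/15) * a 1 2 * a 2 2 + (11/3) * a 1 2 * a 2 3 + 2 * a 1 2 * a 3 0 + (7/2) * a 1 2 * a 3 1 + (58/15) * a 1 2 * a 3 2 + 4 * a 1 2 * a 3 3 + (68/35) * a 1 3 ^ 2 + 1 * a 1 3 * a 2 0 + (14/5) * a 1 3 * a 2 1 + (11/3) * a 1 3 * a 2 2 + (146/35) * a 1 3 * a 2 3 + (3/2) * a 1 3 * a 3 0 + (16/5) * a 1 3 * a 3 1 + 4 * a 1 3 * a 3 2 + (156/35) * a 1 3 * a 3 3 + 4 * a 2 0 ^ 2 + 4 * a 2 0 * a 2 1 + (8/3) * a 2 0 * a 2 2 + 2 * a 2 0 * a 2 3 + 12 * a 2 0 * a 3 0 + 6 * a 2 0 * a 3 1 + 4 * a 2 0 * a 3 2 + 3 * a 2 0 * a 3 3 + (7/3) * a 2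 1 ^ 2 + 4 * a 2 1 * a 2 2 + (18/5) * a 2 1 * a 2 3 + 6 * a 2 1 * a 3 0 + 6 * a 2 1 * a 3 1 + 5 * a 2 1 * a 3 2 + (22/5) * a 2 1 * a 3 3 + (32/15) * a 2 2 ^ 2 + (13/3) * a 2 2 * a 2 3 + 4 * a 2 2 * a 3 0 + 5 * a 2 2 * a 3 1 + (76/15) * a 2 2 * a 3 2 + 5 * a 2 2 * a 3 3 + (83/35) * a 2 3 ^ 2 + 3 * a 2 3 * a 3 0 + (22/5) * a 2 3 * a 3 1 + 5 * a 2 3 * a 3 2 + (186/35) * a 2 3 * a 3 3 + 9 * a 3 0 ^ 2 + 9 * a 3 0 * a 3 1 + 6 * a 3 0 * a 3 2 + (9/2) * a 3 0 * a 3 3 + 4 * a 3 1 ^ 2 + (13/2) * a 3 1 * a 3 2 + (28/5) * a 3 1 * a 3 3 + (47/15) * a 3 2 ^ 2 + 6 * a 3 2 * a 3 3 + (108/35) * a 3 3 ^ 2)) = 28 * (1 * a 0 1 + 1 * a 0 2 + (27/28) * a 0 3 + (1/2) * a 1 1 + (1/2) * a 1 2 + (27/56) * a 1 3 + (9/28)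 * a 2 1 + (9/28) * a 2 2 + (13/42) * a 2 3 + (13/56) * a 3 1 + (13/56) * a 3 2 + (25/112) * a 3 3) ^ 2 + 8 * (1 * a 0 2 + (3/2) * a 0 3 + (1/2) * a 1 2 + (3/4) * a 1 3 + (23/72) * a 2 2 + (23/48) * a 2 3 + (11/48) * a 3 2 + (11/32) * a 3 3) ^ 2 + (27/28) * (1 * a 0 3 + (1/2) * a 1 3 + ((-1)/81) * a 2 1 + ((-1)/81) * a 2 2 + (41/135) * a 2 3 + ((-1)/54) * a 3 1 + ((-1)/54) * a 3 2 + (37/180) * a 3 3) ^ 2 + 28 * (1 * a 1 0 + (1/2) * a 1 1 + (9/28) * a 1 2 + (13/56) * a 1 3 + 1 * a 2 0 + (1/2) * a 2 1 + (9/28) * a 2 2 + (13/56) * a 2 3 + (27/28) * a 3 0 + (27/56) * a 3 1 + (13/42) * a 3 2 + (25/112) * a 3 3) ^ 2 + 4 * (1 * a 1 1 + 1 * a 1 2 + (11/12) * a 1 3 + 1 * a 2 1 + 1 * a 2 2 + (11/12) * a 2 3 + (11/12) * a 3 1 + (11/12) * a 3 2 + (67/80) * a 3 3) ^ 2 + (167/252)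 * (1 * a 1 2 + (3/2) * a 1 3 + 1 * a 2 2 + (3/2) * a 2 3 + ((-3)/167) * a 3 0 + ((-3)/334) * a 3 1 + (732/835) * a 3 2 + (4407/3340) * a 3 3) ^ 2 + (47/630) * (1 * a 1 3 + 1 * a 2 3 + ((-7)/47) * a 3 1 + ((-7)/47) * a 3 2 + (687/940) * a 3 3) ^ 2 + 8 * (1 * a 2 0 + (1/2) * a 2 1 + (23/72) * a 2 2 + (11/48) * a 2 3 + (3/2) * a 3 0 + (3/4) * a 3 1 + (23/48) * a 3 2 + (11/32) * a 3 3) ^ 2 + (161/243) * (1 * a 2 1 + 1 * a 2 2 + (2841/3220) * a 2 3 + (3/2) * a 3 1 + (3/2) * a 3 2 + (8523/6440) * a 3 3) ^ 2 + (91/1620) * (1 * a 2 2 + (3/2) * a 2 3 + (3/2) * a 3 2 + (9/4) * a 3 3) ^ 2 + (97/23184) * (1 * a 2 3 + (3/2) * a 3 3) ^ 2 + (161/167) * (1 * a 3 0 + (1/2) * a 3 1 + (1013/3220) * a 3 2 + (1429/6440) * a 3 3) ^ 2 + (24/329) * (1 * a 3 1 + 1 * a 3 2 + (687/800) * a 3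 3) ^ 2 + (97/23184) * (1 * a 3 2 + (3/2) * a 3 3) ^ 2 + (9/560000) * (1 * a 3 3) ^ 2 := by ring
    have hnn : (0:ℝ) ≤ 28 * (1 * a 0 1 + 1 * a 0 2 + (27/28) * a 0 3 + (1/2) * a 1 1 + (1/2) * a 1 2 + (27/56) * a 1 3 + (9/28) * a 2 1 + (9/28) * a 2 2 + (13/42) * a 2 3 + (13/56) * a 3 1 + (13/56) * a 3 2 + (25/112) * a 3 3) ^ 2 + 8 * (1 * a 0 2 + (3/2) * a 0 3 + (1/2) * a 1 2 + (3/4) * a 1 3 + (23/72) * a 2 2 + (23/48) * a 2 3 + (11/48) * a 3 2 + (11/32) * a 3 3) ^ 2 + (27/28) * (1 * a 0 3 + (1/2) * a 1 3 + ((-1)/81) * a 2 1 + ((-1)/81) * a 2 2 + (41/135) * a 2 3 + ((-1)/54) * a 3 1 + ((-1)/54) * a 3 2 + (37/180) * a 3 3) ^ 2 + 28 * (1 * a 1 0 + (1/2) * a 1 1 + (9/28) * a 1 2 + (13/56) * a 1 3 + 1 * a 2 0 + (1/2) * a 2 1 + (9/28) * a 2 2 + (13/56) * a 2 3 + (27/28)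 * a 3 0 + (27/56) * a 3 1 + (13/42) * a 3 2 + (25/112) * a 3 3) ^ 2 + 4 * (1 * a 1 1 + 1 * a 1 2 + (11/12) * a 1 3 + 1 * a 2 1 + 1 * a 2 2 + (11/12) * a 2 3 + (11/12) * a 3 1 + (11/12) * a 3 2 + (67/80) * a 3 3) ^ 2 + (167/252) * (1 * a 1 2 + (3/2) * a 1 3 + 1 * a 2 2 + (3/2) * a 2 3 + ((-3)/167) * a 3 0 + ((-3)/334) * a 3 1 + (732/835) * a 3 2 + (4407/3340) * a 3 3) ^ 2 + (47/630) * (1 * a 1 3 + 1 * a 2 3 + ((-7)/47) * a 3 1 + ((-7)/47) * a 3 2 + (687/940) * a 3 3) ^ 2 + 8 * (1 * a 2 0 + (1/2) * a 2 1 + (23/72) * a 2 2 + (11/48) * a 2 3 + (3/2) * a 3 0 + (3/4) * a 3 1 + (23/48) * a 3 2 + (11/32) * a 3 3) ^ 2 + (161/243) * (1 * a 2 1 + 1 * a 2 2 + (2841/3220) * a 2 3 + (3/2) * a 3 1 + (3/2) * a 3 2 + (8523/6440) * a 3 3) ^ 2 + (91/1620) * (1 * a 2 2 + (3/2) * a 2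 3 + (3/2) * a 3 2 + (9/4) * a 3 3) ^ 2 + (97/23184) * (1 * a 2 3 + (3/2) * a 3 3) ^ 2 + (161/167) * (1 * a 3 0 + (1/2) * a 3 1 + (1013/3220) * a 3 2 + (1429/6440) * a 3 3) ^ 2 + (24/329) * (1 * a 3 1 + 1 * a 3 2 + (687/800) * a 3 3) ^ 2 + (97/23184) * (1 * a 3 2 + (3/2) * a 3 3) ^ 2 + (9/560000) * (1 * a 3 3) ^ 2 := by positivity
    linarith
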